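/- arXiv:2402.14113 — 10 statements merged into one kernel-verified Lean document; each statement's English description precedes it below -/
import Mathlib

section
/- Let k ≥ 2 and let F ⊆ P(X) be a saturated k-Sperner system on a finite set X with |X| = n > 2^{|F|}, of minimum cardinality among all saturated k-Sperner systems in P(X), with homogeneous atom H and canonical decomposition (A_i)_{i=0}^{k-1}. Then A₀ = {∅}, A_{k-1} = {X}, and for every i ∈ {1,…,k−2}: every small member A ∈ A_i^small satisfies |A| ≥ i, and every large member A ∈ A_i^large satisfies |A| ≤ i + n − (k−1). -/
open Finset

/-- A family contains a chain of `m` sets `C 0 ⊊ C 1 ⊊ ⋯ ⊊ C (m-1)`. -/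
def HasChainOfLen {α : Type*} [DecidableEq α] (F : Finset (Finset α)) (m : ℕ) : Prop :=
  ∃ C : Fin m → Finset α, StrictMono C ∧ ∀ i, C i ∈ F

/-- `F ⊆ P(X)` is a saturated `k`-Sperner system: it has no chain of `k+1` sets,
and adding any `S ⊆ X` with `S ∉ F` creates a chain of `k+1` sets. -/
def IsSatKSperner {α : Type*} [DecidableEq α] (X : Finset α) (F : Finset (Finset α))
    (k : ℕ) : Prop :=
  (∀ A ∈ F, A ⊆ X) ∧ ¬ HasChainOfLen F (k + 1) ∧
    ∀ S ⊆ X, S ∉ F → HasChainOfLen (insert S F) (k + 1)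

/-- `H` is a homogeneous atom for `F` in `P(X)`: `H ⊆ X` is maximal with the property
that every member of `F` contains all of `H` or none of it, and `|H| ≥ 2`. -/
def IsHomogAtom {α : Type*} [DecidableEq α] (X : Finset α) (F : Finset (Finset α))
    (H : Finset α) : Prop :=
  H ⊆ X ∧ (∀ S ∈ F, S ∩ H = ∅ ∨ S ∩ H = H) ∧
    (∀ B ⊆ X, (∀ S ∈ F, S ∩ B = ∅ ∨ S ∩ B = B) → H ⊆ B → H = B) ∧
    2 ≤ H.card

/-- The small members of `F` (those disjoint from the homogeneous atom `H`). -/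
def smallSets {α : Type*} [DecidableEq α] (F : Finset (Finset α)) (H : Finset α) :
    Finset (Finset α) :=
  F.filter fun S => S ∩ H = ∅

/-- The large members of `F` (those containing the homogeneous atom `H`). -/
def largeSets {α : Type*} [DecidableEq α] (F : Finset (Finset α)) (H : Finset α) :
    Finset (Finset α) :=
  F.filter fun S => H ⊆ S

/-- The minimal elements (under inclusion) of a family of sets. -/
def minimalsIn {α : Type*} [DecidableEq α] (G : Finset (Finset α)) : Finset (Finset α) :=
  G.filter fun A => ∀ B ∈ G, B ⊆ A → B = A

/-- What remains of `F` after stripping off minimal elements `i` times. -/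
def canonRest {α : Type*} [DecidableEq α] (F : Finset (Finset α)) : ℕ → Finset (Finset α)
  | 0 => F
  | i + 1 => canonRest F i \ minimalsIn (canonRest F i)

/-- The canonical decomposition of `F` into antichains:
`canonDecomp F i` is the family of minimal elements of `F \ ⋃_{j<i} canonDecomp F j`. -/
def canonDecomp {α : Type*} [DecidableEq α] (F : Finset (Finset α)) (i : ℕ) :
    Finset (Finset α) :=
  minimalsIn (canonRest F i)

/-- A sequence `(D i)_{i=0}^t` of families is layered if for `1 ≤ i ≤ t`,
every member of `D i` strictly contains some member of `D (i-1)`. -/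
def Layered {α : Type*} [DecidableEq α] (D : ℕ → Finset (Finset α)) (t : ℕ) : Prop :=
  ∀ i, 1 ≤ i → i ≤ t → ∀ A ∈ D i, ∃ B ∈ D (i - 1), B ⊂ A

/-!
Toggling a point `h` of the homogeneous atom in a member `A` of `F` gives a set outside `F`
(no member of `F` separates `h` from a second point `h'` of the atom), and the members of
`F` comparable with that set are comparable with `A`. So the chain of length `k + 1` that
saturation provides can be rerouted through `A`: every member of `F` lies on a chain of `k`
members. If `∅ ∉ F`, replacing the minimal members of `F` by `∅` therefore keeps `F`
saturated, and minimality of `|F|` leaves a single minimal member `M ≠ ∅`; but for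
`y ∈ X \ M` the saturating chain of `{y}` lies strictly above `M`, and `M` lengthens it to
`k + 1` members of `F`. Complementation in `X` gives `X ∈ F` in the same way. Finally, a
member of the `i`-th layer sits on top of a chain of `i` members, and on its chain of length
`k` at most `i` members lie below it, so at least `k - 1 - i` strictly larger subsets of `X`
lie above it.
-/

section PartialOrder

variable {β : Type*} [PartialOrder β] {c : Finset β}

theorem IsChain.exists_mem_forall_le (hc : IsChain (· ≤ ·) (c : Set β)) (hne : c.Nonempty) :
    ∃ a ∈ c, ∀ b ∈ c, a ≤ b := by
  obtain ⟨a, ha⟩ := c.exists_minimal hne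
  exact ⟨a, ha.prop, fun b hb => (hc.total ha.prop hb).elim id (ha.le_of_le hb)⟩

theorem IsChain.exists_mem_forall_ge (hc : IsChain (· ≤ ·) (c : Set β)) (hne : c.Nonempty) :
    ∃ a ∈ c, ∀ b ∈ c, b ≤ a := by
  obtain ⟨a, ha⟩ := c.exists_maximal hne
  exact ⟨a, ha.prop, fun b hb => (hc.total hb ha.prop).elim id (ha.le_of_ge hb)⟩

theorem IsChain.exists_strictMono_fin (hc : IsChain (· ≤ ·) (c : Set β)) :
    ∃ C : Fin c.card → β, StrictMono C ∧ ∀ i, C i ∈ c := by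
  classical
  induction hcard : c.card generalizing c with
  | zero => exact ⟨Fin.elim0, fun i => i.elim0, fun i => i.elim0⟩
  | succ m ih =>
    obtain ⟨a, ha, hle⟩ := hc.exists_mem_forall_le (card_pos.1 (by omega))
    obtain ⟨C, hC, hCc⟩ := ih (hc.mono (coe_subset.2 (erase_subset a c)))
      (by rw [card_erase_of_mem ha, hcard]; rfl)
    refine ⟨Fin.cons a C, Fin.strictMono_cons.2 ⟨fun j => ?_, hC⟩, Fin.cases ha fun j => ?_⟩
    · obtain ⟨hne, hmem⟩ := mem_erase.1 (hCc j)
      exact (hle _ hmem).lt_of_ne hne.symm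
    · simpa using mem_of_mem_erase (hCc j)

end PartialOrder

section Chains

variable {α : Type*}

theorem IsChain.injOn_card {c : Finset (Finset α)}
    (hc : IsChain (· ⊆ ·) (c : Set (Finset α))) : Set.InjOn card (c : Set (Finset α)) := by
  intro A hA B hB hAB
  rcases hc.total hA hB with hsub | hsup
  · exact eq_of_subset_of_card_le hsub hAB.ge
  · exact (eq_of_subset_of_card_le hsup hAB.le).symm

theorem IsChain.card_le_card_sub_card {c : Finset (Finset α)}
    (hc : IsChain (· ⊆ ·) (c : Set (Finset α))) {A X : Finset α}
    (hcA : ∀ B ∈ c, A ⊂ B ∧ B ⊆ X) : c.card ≤ X.card - A.card := by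
  rw [← Nat.card_Ioc]
  refine card_le_card_of_injOn card (fun B hB => ?_) hc.injOn_card
  exact mem_Ioc.2 ⟨card_lt_card (hcA B hB).1, card_le_card (hcA B hB).2⟩

variable [DecidableEq α]

theorem hasChainOfLen_iff {F : Finset (Finset α)} {m : ℕ} :
    HasChainOfLen F m ↔
      ∃ c ⊆ F, IsChain (· ⊆ ·) (c : Set (Finset α)) ∧ c.card = m := by
  constructor
  · rintro ⟨C, hC, hCF⟩
    refine ⟨univ.map ⟨C, hC.injective⟩, fun A hA => ?_, ?_, by simp⟩
    · obtain ⟨i, -, rfl⟩ := mem_map.1 hA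
      exact hCF i
    · simpa using hC.monotone.isChain_range
  · rintro ⟨c, hcF, hc, rfl⟩
    obtain ⟨C, hC, hCc⟩ := IsChain.exists_strictMono_fin hc
    exact ⟨C, hC, fun i => hcF (hCc i)⟩

theorem HasChainOfLen.of_isChain {F c : Finset (Finset α)} {m : ℕ} (hcF : c ⊆ F)
    (hc : IsChain (· ⊆ ·) (c : Set (Finset α))) (hm : m ≤ c.card) : HasChainOfLen F m := by
  obtain ⟨d, hdc, rfl⟩ := exists_subset_card_eq hm
  exact hasChainOfLen_iff.2 ⟨d, hdc.trans hcF, hc.mono (coe_subset.2 hdc), rfl⟩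

theorem sdiff_injOn {X : Finset α} {F : Finset (Finset α)} (hFX : ∀ A ∈ F, A ⊆ X) :
    Set.InjOn (X \ ·) (F : Set (Finset α)) := fun A hA B hB hAB => by
  rw [← Finset.sdiff_sdiff_eq_self (hFX A hA), ← Finset.sdiff_sdiff_eq_self (hFX B hB)]
  exact congrArg (X \ ·) hAB

theorem HasChainOfLen.image_sdiff {X : Finset α} {F : Finset (Finset α)} {m : ℕ}
    (hFX : ∀ A ∈ F, A ⊆ X) (hF : HasChainOfLen F m) : HasChainOfLen (F.image (X \ ·)) m := by
  obtain ⟨c, hcF, hc, rfl⟩ := hasChainOfLen_iff.1 hF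
  refine hasChainOfLen_iff.2 ⟨c.image (X \ ·), image_subset_image hcF, ?_,
    card_image_of_injOn (sdiff_injOn fun A hA => hFX A (hcF hA))⟩
  rw [coe_image]
  exact Antitone.isChain_image (fun _ _ hAB => sdiff_le_sdiff_left hAB) hc

theorem IsChain.card_le_card_below_add_card_above {c : Finset (Finset α)} {A : Finset α}
    (hc : IsChain (· ⊆ ·) (insert A (c : Set (Finset α)))) :
    c.card ≤ (c.filter (· ⊂ A)).card + (c.filter (A ⊂ ·)).card + 1 := by
  have hcover : c ⊆ insert A (c.filter (· ⊂ A) ∪ c.filter (A ⊂ ·)) := by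
    intro B hB
    by_cases hBA : B = A
    · exact hBA ▸ mem_insert_self B _
    refine mem_insert_of_mem ?_
    rcases hc (Set.mem_insert_of_mem A hB) (Set.mem_insert A _) hBA with hsub | hsub
    · exact mem_union_left _ (mem_filter.2 ⟨hB, ssubset_of_subset_of_ne hsub hBA⟩)
    · exact mem_union_right _ (mem_filter.2 ⟨hB, ssubset_of_subset_of_ne hsub (Ne.symm hBA)⟩)
  calc c.card
      ≤ (insert A (c.filter (· ⊂ A) ∪ c.filter (A ⊂ ·))).card := card_le_card hcover
    _ ≤ (c.filter (· ⊂ A) ∪ c.filter (A ⊂ ·)).card + 1 := card_insert_le _ _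
    _ ≤ _ := Nat.add_le_add_right (card_union_le _ _) 1

theorem mem_minimalsIn {G : Finset (Finset α)} {A : Finset α} :
    A ∈ minimalsIn G ↔ Minimal (· ∈ G) A := by
  rw [minimalsIn, mem_filter]
  exact ⟨fun h => ⟨h.1, fun B hB hBA => (h.2 B hB hBA).ge⟩,
    fun h => ⟨h.1, fun B hB hBA => le_antisymm hBA (h.2 hB hBA)⟩⟩

theorem minimalsIn_eq_singleton {G : Finset (Finset α)} {M : Finset α} (hM : M ∈ G)
    (hle : ∀ A ∈ G, M ⊆ A) : minimalsIn G = {M} := by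
  refine eq_singleton_iff_unique_mem.2 ⟨mem_minimalsIn.2 ⟨hM, fun A hA _ => hle A hA⟩, ?_⟩
  intro A hA
  have hMA := hle A (mem_minimalsIn.1 hA).1
  exact le_antisymm ((mem_minimalsIn.1 hA).2 hM hMA) hMA

theorem card_inter_minimalsIn_le_one {F c : Finset (Finset α)}
    (hc : IsChain (· ⊆ ·) (c : Set (Finset α))) : (c ∩ minimalsIn F).card ≤ 1 := by
  refine card_le_one.2 fun A hA B hB => ?_
  rw [mem_inter, mem_minimalsIn] at hA hB
  rcases hc.total hA.1 hB.1 with hAB | hBA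
  · exact le_antisymm hAB (hB.2.2 hA.2.prop hAB)
  · exact le_antisymm (hA.2.2 hB.2.prop hBA) hBA

theorem mem_canonRest_succ {F : Finset (Finset α)} {i : ℕ} {A : Finset α} :
    A ∈ canonRest F (i + 1) ↔ A ∈ canonRest F i ∧ ∃ B ∈ canonRest F i, B ⊂ A := by
  rw [canonRest, mem_sdiff, mem_minimalsIn, Minimal]
  simp only [not_and, not_forall, exists_prop, ← lt_iff_le_not_ge]
  exact ⟨fun h => ⟨h.1, h.2 h.1⟩, fun h => ⟨h.1, fun _ => h.2⟩⟩

theorem canonRest_antitone (F : Finset (Finset α)) : Antitone (canonRest F) :=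
  antitone_nat_of_succ_le fun _ => sdiff_subset

theorem canonRest_subset (F : Finset (Finset α)) (i : ℕ) : canonRest F i ⊆ F :=
  canonRest_antitone F (Nat.zero_le i)

theorem le_card_of_mem_canonRest {F : Finset (Finset α)} {i : ℕ} {A : Finset α}
    (hA : A ∈ canonRest F i) : i ≤ A.card := by
  induction i generalizing A with
  | zero => exact Nat.zero_le _
  | succ i ih =>
    obtain ⟨-, B, hB, hBA⟩ := mem_canonRest_succ.1 hA
    exact (ih hB).trans_lt (card_lt_card hBA)

theorem mem_canonRest_card_of_isChain {F c : Finset (Finset α)} {A : Finset α} (hA : A ∈ F)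
    (hcF : c ⊆ F) (hc : IsChain (· ⊆ ·) (c : Set (Finset α))) (hcA : ∀ B ∈ c, B ⊂ A) :
    A ∈ canonRest F c.card := by
  induction hcard : c.card generalizing c A with
  | zero => exact hA
  | succ m ih =>
    obtain ⟨B, hBc, hBge⟩ := IsChain.exists_mem_forall_ge hc (card_pos.1 (by omega))
    have hcard' : (c.erase B).card = m := by rw [card_erase_of_mem hBc, hcard]; rfl
    have hc' : IsChain (· ⊆ ·) (c.erase B : Set (Finset α)) :=
      hc.mono (coe_subset.2 (erase_subset B c))
    have hB : B ∈ canonRest F m := ih (hcF hBc) ((erase_subset B c).trans hcF) hc'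
      (fun D hD => (hBge D (mem_of_mem_erase hD)).lt_of_ne (ne_of_mem_erase hD)) hcard'
    exact mem_canonRest_succ.2 ⟨ih hA ((erase_subset B c).trans hcF) hc'
      (fun D hD => hcA D (mem_of_mem_erase hD)) hcard', B, hB, hcA B hBc⟩

theorem exists_isChain_card_add_of_subset_canonRest {F c : Finset (Finset α)} {j : ℕ}
    (hc : IsChain (· ⊆ ·) (c : Set (Finset α))) (hne : c.Nonempty)
    (hcF : c ⊆ canonRest F j) :
    ∃ d ⊆ F, IsChain (· ⊆ ·) (d : Set (Finset α)) ∧ d.card = c.card + j := by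
  induction j generalizing c with
  | zero => exact ⟨c, hcF, hc, rfl⟩
  | succ j ih =>
    obtain ⟨B, hBc, hBle⟩ := IsChain.exists_mem_forall_le hc hne
    obtain ⟨-, B', hB', hB'B⟩ := mem_canonRest_succ.1 (hcF hBc)
    have hB'c : B' ∉ c := fun hB'c => hB'B.not_ge (hBle B' hB'c)
    have hc' : IsChain (· ⊆ ·) (↑(insert B' c) : Set (Finset α)) := by
      rw [coe_insert]
      exact hc.insert fun D hD _ => Or.inl (hB'B.subset.trans (hBle D hD))
    obtain ⟨d, hdF, hd, hcard⟩ := ih hc' (insert_nonempty B' c)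
      (insert_subset hB' (hcF.trans (canonRest_antitone F j.le_succ)))
    exact ⟨d, hdF, hd, by rw [hcard, card_insert_of_notMem hB'c]; ring⟩

theorem IsHomogAtom.exists_pair_not_separated {X H : Finset α} {F : Finset (Finset α)}
    (hH : IsHomogAtom X F H) :
    ∃ h ∈ X, ∃ h' ∈ X, h ≠ h' ∧ ∀ B ∈ F, (h ∈ B ↔ h' ∈ B) := by
  obtain ⟨hHX, hatom, -, hcard⟩ := hH
  obtain ⟨h, hh, h', hh', hne⟩ := one_lt_card.1 hcard
  refine ⟨h, hHX hh, h', hHX hh', hne, fun B hB => ?_⟩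
  rcases hatom B hB with hdisj | hsub
  · have hnot : ∀ x ∈ H, x ∉ B := disjoint_right.1 (disjoint_iff_inter_eq_empty.2 hdisj)
    exact iff_of_false (hnot h hh) (hnot h' hh')
  · exact iff_of_true (inter_eq_right.1 hsub hh) (inter_eq_right.1 hsub hh')

theorem exists_notMem_comparable_of_not_separated {X A : Finset α} {F : Finset (Finset α)}
    {h h' : α} (hh : h ∈ X) (hne : h ≠ h') (hsep : ∀ B ∈ F, (h ∈ B ↔ h' ∈ B))
    (hAX : A ⊆ X) (hA : A ∈ F) :
    ∃ T ⊆ X, T ∉ F ∧ ∀ B ∈ F, B ⊆ T ∨ T ⊆ B → B ⊆ A ∨ A ⊆ B := by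
  by_cases hhA : h ∈ A
  · have hh'T : h' ∈ A.erase h := mem_erase.2 ⟨hne.symm, (hsep A hA).1 hhA⟩
    refine ⟨A.erase h, (erase_subset h A).trans hAX,
      fun hT => notMem_erase h A ((hsep _ hT).2 hh'T), ?_⟩
    rintro B hB (hBT | hTB)
    · exact Or.inl (hBT.trans (erase_subset h A))
    · rw [← insert_erase hhA]
      exact Or.inr (insert_subset ((hsep B hB).2 (hTB hh'T)) hTB)
  · have hh'A : h' ∉ A := fun h'A => hhA ((hsep A hA).2 h'A)
    have hh'T : h' ∉ insert h A := by simp [hne.symm, hh'A]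
    refine ⟨insert h A, insert_subset hh hAX,
      fun hT => hh'T ((hsep _ hT).1 (mem_insert_self h A)), ?_⟩
    rintro B hB (hBT | hTB)
    · have hhB : h ∉ B := fun hhB => hh'T (hBT ((hsep B hB).1 hhB))
      exact Or.inl ((subset_insert_iff_of_notMem hhB).1 hBT)
    · exact Or.inr ((subset_insert h A).trans hTB)

namespace IsSatKSperner

variable {X : Finset α} {F : Finset (Finset α)} {k : ℕ} {h h' : α}

theorem card_le_of_isChain (hF : IsSatKSperner X F k) {c : Finset (Finset α)} (hcF : c ⊆ F)
    (hc : IsChain (· ⊆ ·) (c : Set (Finset α))) : c.card ≤ k := by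
  by_contra! hlt
  exact hF.2.1 (.of_isChain hcF hc hlt)

theorem exists_isChain_insert_of_notMem (hF : IsSatKSperner X F k) {S : Finset α}
    (hSX : S ⊆ X) (hSF : S ∉ F) :
    ∃ c ⊆ F, IsChain (· ⊆ ·) (insert S (c : Set (Finset α))) ∧ k ≤ c.card := by
  obtain ⟨d, hdF, hd, hcard⟩ := hasChainOfLen_iff.1 (hF.2.2 S hSX hSF)
  have hSd : S ∈ d := by
    by_contra hSd
    have := hF.card_le_of_isChain ((subset_insert_iff_of_notMem hSd).1 hdF) hd
    omega
  refine ⟨d.erase S, subset_insert_iff.1 hdF, by rwa [← coe_insert, insert_erase hSd], ?_⟩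
  have := pred_card_le_card_erase (s := d) (a := S)
  omega

theorem exists_isChain_insert (hF : IsSatKSperner X F k) (hh : h ∈ X) (hne : h ≠ h')
    (hsep : ∀ B ∈ F, (h ∈ B ↔ h' ∈ B)) {S : Finset α} (hSX : S ⊆ X) :
    ∃ c ⊆ F, IsChain (· ⊆ ·) (insert S (c : Set (Finset α))) ∧ k ≤ c.card := by
  by_cases hSF : S ∈ F
  · obtain ⟨T, hTX, hTF, hcomp⟩ :=
      exists_notMem_comparable_of_not_separated hh hne hsep hSX hSF
    obtain ⟨c, hcF, hc, hkc⟩ := hF.exists_isChain_insert_of_notMem hTX hTF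
    refine ⟨c, hcF, (hc.mono (Set.subset_insert T _)).insert fun B hB _ => ?_, hkc⟩
    have hBT : B ≠ T := fun hBT => hTF (hBT ▸ hcF hB)
    exact (hcomp B (hcF hB) (hc (Set.mem_insert_of_mem T hB) (Set.mem_insert T _) hBT)).symm
  · exact hF.exists_isChain_insert_of_notMem hSX hSF

theorem image_sdiff (hF : IsSatKSperner X F k) : IsSatKSperner X (F.image (X \ ·)) k := by
  have hsub : ∀ A ∈ F.image (X \ ·), A ⊆ X := by simp
  have hinv : (F.image (X \ ·)).image (X \ ·) = F := by
    rw [image_image]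
    exact (image_congr fun A hA => Finset.sdiff_sdiff_eq_self (hF.1 A hA)).trans image_id
  refine ⟨hsub, fun hchain => hF.2.1 (hinv ▸ hchain.image_sdiff hsub), fun S hSX hS => ?_⟩
  have hS' : X \ S ∉ F := fun h0 => hS (mem_image.2 ⟨_, h0, Finset.sdiff_sdiff_eq_self hSX⟩)
  have hXS : ∀ A ∈ insert (X \ S) F, A ⊆ X := by
    rw [forall_mem_insert]
    exact ⟨sdiff_subset, hF.1⟩
  have := (hF.2.2 _ sdiff_subset hS').image_sdiff hXS
  rwa [image_insert, Finset.sdiff_sdiff_eq_self hSX] at this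

theorem insert_empty_sdiff_minimalsIn (hF : IsSatKSperner X F k) (hk : 1 ≤ k) (hh : h ∈ X)
    (hne : h ≠ h') (hsep : ∀ B ∈ F, (h ∈ B ↔ h' ∈ B)) (hE : ∅ ∉ F) :
    IsSatKSperner X (insert ∅ (F \ minimalsIn F)) k := by
  refine ⟨?_, fun hchain => ?_, fun S hSX hSG => ?_⟩
  · simp only [mem_insert, mem_sdiff]
    rintro A (rfl | ⟨hA, -⟩)
    exacts [empty_subset X, hF.1 A hA]
  · obtain ⟨c, hcG, hc, hcard⟩ := hasChainOfLen_iff.1 hchain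
    have hsub : c.erase ∅ ⊆ canonRest F 1 := fun A hA =>
      (mem_insert.1 (hcG (mem_of_mem_erase hA))).resolve_left (ne_of_mem_erase hA)
    have hcard' := pred_card_le_card_erase (s := c) (a := ∅)
    obtain ⟨d, hdF, hd, hdcard⟩ := exists_isChain_card_add_of_subset_canonRest
      (hc.mono (coe_subset.2 (erase_subset ∅ c))) (card_pos.1 (by omega)) hsub
    have := hF.card_le_of_isChain hdF hd
    omega
  · -- A chain has at most one minimal member of `F`; `∅` and `S` make up for its removal.
    obtain ⟨c, hcF, hc, hkc⟩ := hF.exists_isChain_insert hh hne hsep hSX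
    have hc' : c \ minimalsIn F ⊆ F \ minimalsIn F := sdiff_subset_sdiff hcF le_rfl
    have hSc' : S ∉ c \ minimalsIn F := fun hS => hSG (mem_insert_of_mem (hc' hS))
    have hE' : ∅ ∉ insert S (c \ minimalsIn F) := by
      rw [mem_insert, not_or]
      exact ⟨fun h0 => hSG (h0 ▸ mem_insert_self _ _), fun h0 => hE (mem_sdiff.1 (hc' h0)).1⟩
    have hmin := card_inter_minimalsIn_le_one (F := F) (hc.mono (Set.subset_insert S _))
    have hsplit := card_sdiff_add_card_inter c (minimalsIn F)
    refine .of_isChain (c := insert ∅ (insert S (c \ minimalsIn F))) ?_ ?_ ?_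
    · exact insert_subset (mem_insert_of_mem (mem_insert_self _ _))
        (insert_subset_insert S (hc'.trans (subset_insert _ _)))
    · rw [coe_insert, coe_insert]
      refine (hc.mono (Set.insert_subset_insert ?_)).insert fun B _ _ => Or.inl (empty_subset B)
      exact coe_subset.2 sdiff_subset
    · rw [card_insert_of_notMem hE', card_insert_of_notMem hSc']
      omega

theorem exists_not_superset (hF : IsSatKSperner X F k) (hk : 2 ≤ k) {M : Finset α}
    (hM : M ∈ F) (hM0 : M ≠ ∅) : ∃ A ∈ F, ¬ M ⊆ A := by
  by_contra! hle
  have hE : ∅ ∉ F := fun h0 => hM0 (subset_empty.1 (hle ∅ h0))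
  have hMX : M ⊂ X := by
    refine ssubset_of_subset_of_ne (hF.1 M hM) fun hMX => ?_
    obtain ⟨c, hcF, -, hkc⟩ := hF.exists_isChain_insert_of_notMem (empty_subset X) hE
    have hcX : c ⊆ {X} := fun A hA =>
      mem_singleton.2 ((hF.1 A (hcF hA)).antisymm (hMX ▸ hle A (hcF hA)))
    have := card_le_card hcX
    rw [card_singleton] at this
    omega
  obtain ⟨y, hyX, hyM⟩ := exists_of_ssubset hMX
  have hy : {y} ∉ F := fun hy => by
    rcases subset_singleton_iff.1 (hle _ hy) with h0 | h0
    · exact hM0 h0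
    · exact hyM (h0 ▸ mem_singleton_self y)
  obtain ⟨d, hdF, hd, hkd⟩ :=
    hF.exists_isChain_insert_of_notMem (singleton_subset_iff.2 hyX) hy
  have hyd : ∀ B ∈ d, y ∈ B := fun B hB => by
    have hBy : B ≠ {y} := fun hBy => hy (hBy ▸ hdF hB)
    rcases hd (Set.mem_insert_of_mem _ hB) (Set.mem_insert _ _) hBy with hsub | hsub
    · rcases subset_singleton_iff.1 hsub with h0 | h0
      exacts [absurd (h0 ▸ hdF hB) hE, absurd h0 hBy]
    · exact singleton_subset_iff.1 hsub
  have hMd : M ∉ d := fun hMd => hyM (hyd M hMd)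
  refine hF.2.1 (.of_isChain (c := insert M d) (insert_subset hM hdF) ?_ ?_)
  · rw [coe_insert]
    exact (hd.mono (Set.subset_insert _ _)).insert fun B hB _ => Or.inl (hle B (hdF hB))
  · rw [card_insert_of_notMem hMd]
    omega

theorem empty_mem_of_minimal (hF : IsSatKSperner X F k) (hk : 2 ≤ k)
    (hmin : ∀ G : Finset (Finset α), IsSatKSperner X G k → F.card ≤ G.card)
    (hh : h ∈ X) (hne : h ≠ h') (hsep : ∀ B ∈ F, (h ∈ B ↔ h' ∈ B)) : ∅ ∈ F := by
  by_contra hE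
  have hcardG := hmin _ (hF.insert_empty_sdiff_minimalsIn (by omega) hh hne hsep hE)
  have hsub : minimalsIn F ⊆ F := filter_subset _ F
  rw [card_insert_of_notMem fun h0 => hE (mem_sdiff.1 h0).1, card_sdiff_of_subset hsub]
    at hcardG
  have hone : (minimalsIn F).card ≤ 1 := by
    have := card_le_card hsub
    omega
  obtain ⟨c, hcF, -, hkc⟩ := hF.exists_isChain_insert_of_notMem (empty_subset X) hE
  obtain ⟨A, hA⟩ : F.Nonempty := card_pos.1 (by have := card_le_card hcF; omega)
  obtain ⟨M, -, hM⟩ := F.exists_le_minimal hA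
  obtain ⟨B, hBF, hMB⟩ := hF.exists_not_superset hk hM.prop fun h0 => hE (h0 ▸ hM.prop)
  obtain ⟨M', hM'B, hM'⟩ := F.exists_le_minimal hBF
  exact hMB (card_le_one.1 hone M (mem_minimalsIn.2 hM) M' (mem_minimalsIn.2 hM') ▸ hM'B)

theorem ground_mem_of_minimal (hF : IsSatKSperner X F k) (hk : 2 ≤ k)
    (hmin : ∀ G : Finset (Finset α), IsSatKSperner X G k → F.card ≤ G.card)
    (hh : h ∈ X) (hh' : h' ∈ X) (hne : h ≠ h') (hsep : ∀ B ∈ F, (h ∈ B ↔ h' ∈ B)) :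
    X ∈ F := by
  have hcard {G : Finset (Finset α)} (hG : IsSatKSperner X G k) :
      (G.image (X \ ·)).card = G.card :=
    card_image_of_injOn (sdiff_injOn hG.1)
  have hE := hF.image_sdiff.empty_mem_of_minimal hk
    (fun G hG => hcard hF ▸ (hcard hG).symm ▸ hmin _ hG.image_sdiff) hh hne
    (by
      simp only [forall_mem_image, mem_sdiff, hh, hh', true_and]
      exact fun B hB => not_congr (hsep B hB))
  obtain ⟨B, hB, hXB⟩ := mem_image.1 hE
  exact (hF.1 B hB).antisymm (sdiff_eq_empty_iff_subset.1 hXB) ▸ hB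

theorem canonRest_pred_eq_singleton (hF : IsSatKSperner X F k) (hk : 1 ≤ k) (hh : h ∈ X)
    (hne : h ≠ h') (hsep : ∀ B ∈ F, (h ∈ B ↔ h' ∈ B)) (hX : X ∈ F) :
    canonRest F (k - 1) = {X} := by
  have hXk : X ∈ canonRest F (k - 1) := by
    obtain ⟨c, hcF, hc, hkc⟩ := hF.exists_isChain_insert hh hne hsep (subset_refl X)
    have hXc : X ∈ canonRest F (c.erase X).card :=
      mem_canonRest_card_of_isChain hX ((erase_subset X c).trans hcF)
        (hc.mono ((coe_subset.2 (erase_subset X c)).trans (Set.subset_insert X _)))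
        fun B hB =>
          ssubset_of_subset_of_ne (hF.1 B (hcF (mem_of_mem_erase hB))) (ne_of_mem_erase hB)
    have := pred_card_le_card_erase (s := c) (a := X)
    exact canonRest_antitone F (by omega) hXc
  refine eq_singleton_iff_unique_mem.2 ⟨hXk, fun B hB => by_contra fun hBX => ?_⟩
  obtain ⟨d, hdF, hd, hcard⟩ := exists_isChain_card_add_of_subset_canonRest
    (c := {B, X}) (by rw [coe_pair]; exact .pair (hF.1 B (canonRest_subset F _ hB)))
    (insert_nonempty B {X}) (insert_subset hB (singleton_subset_iff.2 hXk))
  have := hF.card_le_of_isChain hdF hd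
  rw [card_pair hBX] at hcard
  omega

theorem card_add_le_of_mem_canonDecomp (hF : IsSatKSperner X F k) (hh : h ∈ X) (hne : h ≠ h')
    (hsep : ∀ B ∈ F, (h ∈ B ↔ h' ∈ B)) {i : ℕ} {A : Finset α}
    (hA : A ∈ canonDecomp F i) : A.card + (k - 1) ≤ i + X.card := by
  rw [canonDecomp, mem_minimalsIn] at hA
  have hAF := canonRest_subset F i hA.prop
  obtain ⟨c, hcF, hc, hkc⟩ := hF.exists_isChain_insert hh hne hsep (hF.1 A hAF)
  have hc' : IsChain (· ⊆ ·) (c : Set (Finset α)) := hc.mono (Set.subset_insert A _)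
  have hbelow : (c.filter (· ⊂ A)).card ≤ i := by
    have hAb := mem_canonRest_card_of_isChain hAF ((filter_subset _ c).trans hcF)
      (hc'.mono (coe_subset.2 (filter_subset _ c))) fun B hB => (mem_filter.1 hB).2
    by_contra! hi
    obtain ⟨-, B, hB, hBA⟩ := mem_canonRest_succ.1 (canonRest_antitone F hi hAb)
    exact hBA.not_ge (hA.2 hB hBA.subset)
  have habove : (c.filter (A ⊂ ·)).card ≤ X.card - A.card :=
    (hc'.mono (coe_subset.2 (filter_subset _ c))).card_le_card_sub_card fun B hB =>
      ⟨(mem_filter.1 hB).2, hF.1 B (hcF (mem_of_mem_filter B hB))⟩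
  have := hc.card_le_card_below_add_card_above
  have := card_le_card (hF.1 A hAF)
  omega

end IsSatKSperner

end Chains

theorem canonical_decomposition_sizes_general {α : Type*} [DecidableEq α]
    (X : Finset α) (F : Finset (Finset α)) (k n : ℕ) (hk : 2 ≤ k)
    (hn : X.card = n)
    (hsat : IsSatKSperner X F k)
    (hmin : ∀ G : Finset (Finset α), IsSatKSperner X G k → F.card ≤ G.card)
    (H : Finset α) (hH : IsHomogAtom X F H) :
    canonDecomp F 0 = {(∅ : Finset α)} ∧ canonDecomp F (k - 1) = {X} ∧
      ∀ i, 1 ≤ i → i ≤ k - 2 →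
        (∀ A ∈ smallSets (canonDecomp F i) H, i ≤ A.card) ∧
        (∀ A ∈ largeSets (canonDecomp F i) H, A.card ≤ i + n - (k - 1)) := by
  obtain ⟨h, hh, h', hh', hne, hsep⟩ := hH.exists_pair_not_separated
  have hE : ∅ ∈ F := hsat.empty_mem_of_minimal hk hmin hh hne hsep
  have hX : X ∈ F := hsat.ground_mem_of_minimal hk hmin hh hh' hne hsep
  refine ⟨minimalsIn_eq_singleton hE fun A _ => empty_subset A, ?_,
    fun i _ _ => ⟨fun A hA => ?_, fun A hA => ?_⟩⟩
  · rw [canonDecomp, hsat.canonRest_pred_eq_singleton (by omega) hh hne hsep hX]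
    exact minimalsIn_eq_singleton (mem_singleton_self X) fun A hA => (mem_singleton.1 hA).ge
  · exact le_card_of_mem_canonRest (filter_subset _ _ (mem_filter.1 hA).1)
  · have := hsat.card_add_le_of_mem_canonDecomp hh hne hsep (mem_filter.1 hA).1
    omega

theorem canonical_decomposition_sizes {α : Type*} [DecidableEq α]
    (X : Finset α) (F : Finset (Finset α)) (k n : ℕ) (hk : 2 ≤ k)
    (hn : X.card = n) (hbig : 2 ^ F.card < n)
    (hsat : IsSatKSperner X F k)
    (hmin : ∀ G : Finset (Finset α), IsSatKSperner X G k → F.card ≤ G.card)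
    (H : Finset α) (hH : IsHomogAtom X F H) :
    canonDecomp F 0 = {(∅ : Finset α)} ∧ canonDecomp F (k - 1) = {X} ∧
      ∀ i, 1 ≤ i → i ≤ k - 2 →
        (∀ A ∈ smallSets (canonDecomp F i) H, i ≤ A.card) ∧
        (∀ A ∈ largeSets (canonDecomp F i) H, A.card ≤ i + n - (k - 1)) :=
  canonical_decomposition_sizes_general X F k n hk hn hsat hmin H hH
end

section
/- Let k ≥ 7 and i be integers with 2 ≤ i ≤ ⌊(k−1)/2⌋, let X be a finite set with |X| = n, and let A ⊆ P(X) be a saturated antichain with homogeneous atom H such that every small member S ∈ A^small satisfies |S| ≥ i and every large member L ∈ A^large satisfies |L| ≤ n − (k−i−1). Then |A^small| + |A^large| > exp(2·ln 2 · i(k−i−1)/(k−1)), i.e. |A^small| + |A^large| > 2^{2i(k−i−1)/(k−1)}. -/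
open Finset

private lemma sum_powerset_weight' {α : Type*} [DecidableEq α] (S : Finset α) (p q : ℝ)
    (h : p + q = 1) :
    ∑ T ∈ S.powerset, p ^ T.card * q ^ (S.card - T.card) = 1 := by
  have key := Finset.prod_add (fun _ : α => p) (fun _ : α => q) S
  simp only [Finset.prod_const] at key
  calc ∑ T ∈ S.powerset, p ^ T.card * q ^ (S.card - T.card)
      = ∑ T ∈ S.powerset, p ^ T.card * q ^ (S \ T).card :=
        Finset.sum_congr rfl (fun T hT => by
          rw [Finset.card_sdiff_of_subset (Finset.mem_powerset.mp hT)])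
    _ = (p + q) ^ S.card := key.symm
    _ = 1 := by rw [h, one_pow]

private lemma sum_downset_weight' {α : Type*} [DecidableEq α] (S D : Finset α) (hD : D ⊆ S)
    (p q : ℝ) (h : p + q = 1) :
    ∑ T ∈ D.powerset, p ^ T.card * q ^ (S.card - T.card) = q ^ (S.card - D.card) := by
  have hcong : ∀ T ∈ D.powerset, p ^ T.card * q ^ (S.card - T.card)
      = q ^ (S.card - D.card) * (p ^ T.card * q ^ (D.card - T.card)) := by
    intro T hT
    have hTD : T ⊆ D := Finset.mem_powerset.mp hT
    have h1 : S.card - T.card = (S.card - D.card) + (D.card - T.card) := by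
      have := Finset.card_le_card hTD
      have := Finset.card_le_card hD
      omega
    rw [h1, pow_add]; ring
  rw [Finset.sum_congr rfl hcong, ← Finset.mul_sum, sum_powerset_weight' D p q h, mul_one]

private lemma sum_upset_weight' {α : Type*} [DecidableEq α] (S M : Finset α) (hM : M ⊆ S)
    (p q : ℝ) (h : p + q = 1) :
    ∑ T ∈ S.powerset.filter (fun T => M ⊆ T), p ^ T.card * q ^ (S.card - T.card)
      = p ^ M.card := by
  have hbij : ∑ T ∈ S.powerset.filter (fun T => M ⊆ T), p ^ T.card * q ^ (S.card - T.card)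
      = ∑ U ∈ (S \ M).powerset, p ^ (U ∪ M).card * q ^ (S.card - (U ∪ M).card) := by
    apply Finset.sum_nbij' (fun T => T \ M) (fun U => U ∪ M)
    · intro T hT
      obtain ⟨hTS, hMT⟩ := Finset.mem_filter.mp hT
      exact Finset.mem_powerset.mpr
        (Finset.sdiff_subset_sdiff (Finset.mem_powerset.mp hTS) (le_refl _))
    · intro U hU
      have hU' : U ⊆ S \ M := Finset.mem_powerset.mp hU
      refine Finset.mem_filter.mpr ⟨Finset.mem_powerset.mpr ?_, Finset.subset_union_right⟩
      exact Finset.union_subset (hU'.trans Finset.sdiff_subset) hM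
    · intro T hT
      obtain ⟨_, hMT⟩ := Finset.mem_filter.mp hT
      exact Finset.sdiff_union_of_subset hMT
    · intro U hU
      have hU' : U ⊆ S \ M := Finset.mem_powerset.mp hU
      exact Finset.union_sdiff_cancel_right (Finset.disjoint_of_subset_left hU' Finset.sdiff_disjoint)
    · intro T hT
      obtain ⟨_, hMT⟩ := Finset.mem_filter.mp hT
      rw [Finset.sdiff_union_of_subset hMT]
  rw [hbij]
  have hcong : ∀ U ∈ (S \ M).powerset, p ^ (U ∪ M).card * q ^ (S.card - (U ∪ M).card)
      = p ^ M.card * (p ^ U.card * q ^ ((S \ M).card - U.card)) := by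
    intro U hU
    have hU' : U ⊆ S \ M := Finset.mem_powerset.mp hU
    have hdisj : Disjoint U M := Finset.disjoint_of_subset_left hU' Finset.sdiff_disjoint
    have h1 : (U ∪ M).card = U.card + M.card := Finset.card_union_of_disjoint hdisj
    have h2 : (S \ M).card = S.card - M.card := Finset.card_sdiff_of_subset hM
    have h3 : U.card ≤ (S \ M).card := Finset.card_le_card hU'
    have h4 : M.card ≤ S.card := Finset.card_le_card hM
    have h5 : S.card - (U ∪ M).card = (S \ M).card - U.card := by omega
    rw [h5, h1, pow_add]; ring
  rw [Finset.sum_congr rfl hcong, ← Finset.mul_sum, sum_powerset_weight' (S \ M) p q h, mul_one]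

set_option maxHeartbeats 1600000 in
theorem antichain_lower_bound {α : Type*} [DecidableEq α]
    (X : Finset α) (n k i : ℕ) (hn : X.card = n)
    (hk : 7 ≤ k) (hi2 : 2 ≤ i) (hik : i ≤ (k - 1) / 2)
    (A : Finset (Finset α)) (hsat : IsSatKSperner X A 1)
    (H : Finset α) (hH : IsHomogAtom X A H)
    (hsmall : ∀ S ∈ smallSets A H, i ≤ S.card)
    (hlarge : ∀ L ∈ largeSets A H, L.card + (k - i - 1) ≤ n) :
    (2 : ℝ) ^ (((2 * i * (k - i - 1) : ℕ) : ℝ) / ((k - 1 : ℕ) : ℝ)) <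
      ((smallSets A H).card + (largeSets A H).card : ℝ) := by
  classical
  obtain ⟨hsub, hnochain, hsatur⟩ := hsat
  obtain ⟨hHX, hatom, _hmax, hH2⟩ := hH
  set j : ℕ := k - i - 1 with hjdef
  have hij : i ≤ j := by omega
  have hipj : i + j = k - 1 := by omega
  obtain ⟨x, hxH⟩ : H.Nonempty := Finset.card_pos.mp (by omega)
  set Y : Finset α := X \ H with hYdef
  have hsmallY : ∀ M ∈ smallSets A H, M ⊆ Y := by
    intro M hM
    obtain ⟨hMA, hMH⟩ := Finset.mem_filter.mp hM
    exact Finset.subset_sdiff.mpr ⟨hsub M hMA, Finset.disjoint_iff_inter_eq_empty.mpr hMH⟩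
  -- covering claim
  have cover : ∀ T ∈ Y.powerset,
      (∃ M ∈ smallSets A H, M ⊆ T) ∨ ∃ L ∈ largeSets A H, T ⊆ L \ H := by
    intro T hT
    have hTY : T ⊆ Y := Finset.mem_powerset.mp hT
    have hTX : T ⊆ X := hTY.trans Finset.sdiff_subset
    have hTH : ∀ t ∈ T, t ∉ H := fun t ht => (Finset.mem_sdiff.mp (hTY ht)).2
    have hSX : insert x T ⊆ X := Finset.insert_subset (hHX hxH) hTX
    have hSA : insert x T ∉ A := by
      intro hmem
      rcases hatom _ hmem with h0 | h1
      · have hx' : x ∈ (insert x T) ∩ H :=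
          Finset.mem_inter.mpr ⟨Finset.mem_insert_self _ _, hxH⟩
        rw [h0] at hx'
        exact absurd hx' (Finset.notMem_empty x)
      · obtain ⟨y, hyH, hyx⟩ := Finset.exists_mem_ne (s := H) (by omega) x
        have hy2 : y ∈ insert x T := by
          have : y ∈ (insert x T) ∩ H := by rw [h1]; exact hyH
          exact (Finset.mem_inter.mp this).1
        rcases Finset.mem_insert.mp hy2 with h | h
        · exact hyx h
        · exact hTH y h hyH
    obtain ⟨C, hmono, hmemC⟩ := hsatur _ hSX hSA
    have h01 : C 0 ⊂ C 1 := hmono (by decide)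
    rcases Finset.mem_insert.mp (hmemC 0) with hc0 | hc0 <;>
      rcases Finset.mem_insert.mp (hmemC 1) with hc1 | hc1
    · exact absurd (hc0.trans hc1.symm) h01.ne
    · -- C 0 = insert x T, C 1 ∈ A : large
      right
      have hs1 : insert x T ⊆ C 1 := hc0 ▸ h01.subset
      have hx1 : x ∈ C 1 := hs1 (Finset.mem_insert_self _ _)
      have hHC : H ⊆ C 1 := by
        rcases hatom _ hc1 with he | he
        · exfalso
          have : x ∈ C 1 ∩ H := Finset.mem_inter.mpr ⟨hx1, hxH⟩
          rw [he] at this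
          exact Finset.notMem_empty x this
        · intro z hz
          have : z ∈ C 1 ∩ H := by rw [he]; exact hz
          exact (Finset.mem_inter.mp this).1
      refine ⟨C 1, Finset.mem_filter.mpr ⟨hc1, hHC⟩, ?_⟩
      intro t ht
      exact Finset.mem_sdiff.mpr ⟨hs1 (Finset.mem_insert_of_mem ht), hTH t ht⟩
    · -- C 0 ∈ A, C 1 = insert x T : small
      left
      have hs0 : C 0 ⊆ insert x T := hc1 ▸ h01.subset
      have h0H : C 0 ∩ H = ∅ := by
        rcases hatom _ hc0 with he | he
        · exact he
        · exfalso
          obtain ⟨y, hyH, hyx⟩ := Finset.exists_mem_ne (s := H) (by omega) x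
          have hy0 : y ∈ C 0 := by
            have : y ∈ C 0 ∩ H := by rw [he]; exact hyH
            exact (Finset.mem_inter.mp this).1
          rcases Finset.mem_insert.mp (hs0 hy0) with h | h
          · exact hyx h
          · exact hTH y h hyH
      refine ⟨C 0, Finset.mem_filter.mpr ⟨hc0, h0H⟩, ?_⟩
      intro c hc
      rcases Finset.mem_insert.mp (hs0 hc) with h | h
      · exfalso
        have : x ∈ C 0 ∩ H := Finset.mem_inter.mpr ⟨h ▸ hc, hxH⟩
        rw [h0H] at this
        exact Finset.notMem_empty x this
      · exact h
    · exact absurd ⟨C, hmono, fun i => by fin_cases i <;> assumption⟩ hnochain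
  -- real number setup
  have hij0 : (0:ℝ) < (i:ℝ) + (j:ℝ) := by positivity
  have hijne : (i:ℝ) + (j:ℝ) ≠ 0 := hij0.ne'
  have hjpos : (0:ℝ) < (j:ℝ) := by
    have : 0 < j := by omega
    exact_mod_cast this
  set p : ℝ := (2:ℝ) ^ (-(2*(j:ℝ)) / ((i:ℝ)+(j:ℝ))) with hpdef
  have hp0 : 0 < p := Real.rpow_pos_of_pos two_pos _
  have hp1 : p < 1 := by
    apply Real.rpow_lt_one_of_one_lt_of_neg one_lt_two
    apply div_neg_of_neg_of_pos _ hij0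
    linarith
  set q : ℝ := 1 - p with hqdef
  have hpq : p + q = 1 := by ring
  have hq0 : 0 < q := by simp only [hqdef]; linarith
  have hq1 : q < 1 := by simp only [hqdef]; linarith
  have hpb : 1 ≤ p + (2:ℝ) ^ (-(2*(i:ℝ)) / ((i:ℝ)+(j:ℝ))) := by
    set r : ℝ := (2:ℝ) ^ (((i:ℝ)-(j:ℝ)) / ((i:ℝ)+(j:ℝ))) with hrdef
    have hr0 : 0 < r := Real.rpow_pos_of_pos two_pos _
    have hps : p = r * 2⁻¹ := by
      rw [hpdef, hrdef, ← Real.rpow_neg_one 2, ← Real.rpow_add two_pos]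
      congr 1
      field_simp
      ring
    have hbs : (2:ℝ) ^ (-(2*(i:ℝ)) / ((i:ℝ)+(j:ℝ))) = r⁻¹ * 2⁻¹ := by
      rw [hrdef, ← Real.rpow_neg two_pos.le, ← Real.rpow_neg_one 2, ← Real.rpow_add two_pos]
      congr 1
      field_simp
      ring
    have hr2 : 2 ≤ r + r⁻¹ := by
      nlinarith [sq_nonneg (r - 1), mul_inv_cancel₀ hr0.ne', inv_pos.mpr hr0]
    rw [hps, hbs]
    linarith
  have hqjpi : q ^ j ≤ p ^ i := by
    have hqb : q ≤ (2:ℝ) ^ (-(2*(i:ℝ)) / ((i:ℝ)+(j:ℝ))) := by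
      simp only [hqdef]; linarith
    calc q ^ j ≤ ((2:ℝ) ^ (-(2*(i:ℝ)) / ((i:ℝ)+(j:ℝ)))) ^ j :=
          pow_le_pow_left₀ hq0.le hqb j
      _ = p ^ i := by
          rw [hpdef, ← Real.rpow_natCast ((2:ℝ) ^ (-(2*(i:ℝ)) / ((i:ℝ)+(j:ℝ)))) j,
            ← Real.rpow_natCast ((2:ℝ) ^ (-(2*(j:ℝ)) / ((i:ℝ)+(j:ℝ)))) i,
            ← Real.rpow_mul two_pos.le, ← Real.rpow_mul two_pos.le]
          congr 1
          ring
  -- weights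
  set w : Finset α → ℝ := fun T => p ^ T.card * q ^ (Y.card - T.card) with hwdef
  have hw0 : ∀ T : Finset α, 0 < w T := fun T => mul_pos (pow_pos hp0 _) (pow_pos hq0 _)
  have hsum1 : ∑ T ∈ Y.powerset, w T = 1 := sum_powerset_weight' Y p q hpq
  set g : Finset α → ℝ := fun T =>
    (∑ M ∈ smallSets A H, if M ⊆ T then w T else 0)
    + (∑ L ∈ largeSets A H, if T ⊆ L \ H then w T else 0) with hgdef
  have hite_nonneg : ∀ (c : Prop) [Decidable c] (T : Finset α),
      0 ≤ if c then w T else 0 := by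
    intro c _ T
    split
    · exact (hw0 T).le
    · exact le_refl 0
  have hle : ∀ T ∈ Y.powerset, w T ≤ g T := by
    intro T hT
    have ha : (0:ℝ) ≤ ∑ M ∈ smallSets A H, if M ⊆ T then w T else 0 :=
      Finset.sum_nonneg fun M _ => hite_nonneg _ T
    have hb : (0:ℝ) ≤ ∑ L ∈ largeSets A H, if T ⊆ L \ H then w T else 0 :=
      Finset.sum_nonneg fun L _ => hite_nonneg _ T
    rcases cover T hT with ⟨M, hM, hMT⟩ | ⟨L, hL, hTL⟩
    · have hsingle : w T ≤ ∑ M' ∈ smallSets A H, if M' ⊆ T then w T else 0 := by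
        have := Finset.single_le_sum (f := fun M' => if M' ⊆ T then w T else 0)
          (fun M' _ => hite_nonneg _ T) hM
        simpa [hMT] using this
      simp only [hgdef]
      linarith
    · have hsingle : w T ≤ ∑ L' ∈ largeSets A H, if T ⊆ L' \ H then w T else 0 := by
        have := Finset.single_le_sum (f := fun L' => if T ⊆ L' \ H then w T else 0)
          (fun L' _ => hite_nonneg _ T) hL
        simpa [hTL] using this
      simp only [hgdef]
      linarith
  have hMsum : ∀ M ∈ smallSets A H, (∑ T ∈ Y.powerset, if M ⊆ T then w T else 0) ≤ p ^ i := by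
    intro M hM
    rw [← Finset.sum_filter]
    have heq : ∑ T ∈ Y.powerset.filter (fun T => M ⊆ T), w T = p ^ M.card :=
      sum_upset_weight' Y M (hsmallY M hM) p q hpq
    rw [heq]
    exact pow_le_pow_of_le_one hp0.le hp1.le (hsmall M hM)
  have hLsum : ∀ L ∈ largeSets A H, (∑ T ∈ Y.powerset, if T ⊆ L \ H then w T else 0) ≤ p ^ i := by
    intro L hL
    obtain ⟨hLA, hHL⟩ := Finset.mem_filter.mp hL
    have hLX : L ⊆ X := hsub L hLA
    have hLHY : L \ H ⊆ Y := Finset.sdiff_subset_sdiff hLX (le_refl _)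
    rw [← Finset.sum_filter]
    have hfilt : Y.powerset.filter (fun T => T ⊆ L \ H) = (L \ H).powerset := by
      ext T
      simp only [Finset.mem_filter, Finset.mem_powerset]
      exact ⟨fun h => h.2, fun h => ⟨h.trans hLHY, h⟩⟩
    rw [hfilt]
    have heq : ∑ T ∈ (L \ H).powerset, w T = q ^ (Y.card - (L \ H).card) :=
      sum_downset_weight' Y (L \ H) hLHY p q hpq
    rw [heq]
    calc q ^ (Y.card - (L \ H).card) ≤ q ^ j := by
          apply pow_le_pow_of_le_one hq0.le hq1.le
          have h1 : (L \ H).card = L.card - H.card := Finset.card_sdiff_of_subset hHL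
          have h2 : Y.card = X.card - H.card := Finset.card_sdiff_of_subset hHX
          have h3 : H.card ≤ L.card := Finset.card_le_card hHL
          have h4 : L.card ≤ X.card := Finset.card_le_card hLX
          have h5 := hlarge L hL
          omega
      _ ≤ p ^ i := hqjpi
  have hgsum : ∑ T ∈ Y.powerset, g T
      ≤ (((smallSets A H).card : ℝ) + ((largeSets A H).card : ℝ)) * p ^ i := by
    have hsplit : ∑ T ∈ Y.powerset, g T
        = (∑ M ∈ smallSets A H, ∑ T ∈ Y.powerset, if M ⊆ T then w T else 0)
          + (∑ L ∈ largeSets A H, ∑ T ∈ Y.powerset, if T ⊆ L \ H then w T else 0) := by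
      simp only [hgdef]
      rw [Finset.sum_add_distrib]
      rw [Finset.sum_comm (s := Y.powerset) (t := smallSets A H),
        Finset.sum_comm (s := Y.powerset) (t := largeSets A H)]
    rw [hsplit]
    have h1 := Finset.sum_le_card_nsmul (smallSets A H) _ _ hMsum
    have h2 := Finset.sum_le_card_nsmul (largeSets A H) _ _ hLsum
    rw [nsmul_eq_mul] at h1 h2
    calc _ ≤ ((smallSets A H).card : ℝ) * p ^ i + ((largeSets A H).card : ℝ) * p ^ i :=
          add_le_add h1 h2
      _ = (((smallSets A H).card : ℝ) + ((largeSets A H).card : ℝ)) * p ^ i := by ring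
  -- exponent bookkeeping
  have hcast : ((2 * i * (k - i - 1) : ℕ) : ℝ) / ((k - 1 : ℕ) : ℝ)
      = 2 * (i:ℝ) * (j:ℝ) / ((i:ℝ) + (j:ℝ)) := by
    have h1 : (2 * i * (k - i - 1) : ℕ) = 2 * i * j := rfl
    rw [h1, ← hipj]
    push_cast
    ring
  rw [hcast]
  set c : ℝ := 2 * (i:ℝ) * (j:ℝ) / ((i:ℝ) + (j:ℝ)) with hcdef
  have h2c0 : (0:ℝ) < (2:ℝ) ^ c := Real.rpow_pos_of_pos two_pos c
  have hkey : (2:ℝ) ^ c * p ^ i = 1 := by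
    rw [hpdef, ← Real.rpow_natCast ((2:ℝ) ^ (-(2*(j:ℝ)) / ((i:ℝ)+(j:ℝ)))) i,
      ← Real.rpow_mul two_pos.le, ← Real.rpow_add two_pos]
    rw [show c + -(2*(j:ℝ)) / ((i:ℝ)+(j:ℝ)) * (i:ℝ) = 0 by rw [hcdef]; field_simp; ring]
    exact Real.rpow_zero 2
  have hgoal : (2:ℝ) ^ c < ((smallSets A H).card : ℝ) + ((largeSets A H).card : ℝ) := by
    by_cases hbig : 2 ≤ (smallSets A H).card ∨ 2 ≤ (largeSets A H).card
    · have hstrict : (1:ℝ) < ∑ T ∈ Y.powerset, g T := by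
        rw [← hsum1]
        apply Finset.sum_lt_sum hle
        rcases hbig with hs2 | hl2
        · refine ⟨Y, Finset.mem_powerset_self Y, ?_⟩
          have hsum : ∑ M ∈ smallSets A H, (if M ⊆ Y then w Y else 0)
              = ((smallSets A H).card : ℝ) * w Y := by
            rw [Finset.sum_congr rfl (fun M hM => if_pos (hsmallY M hM)), Finset.sum_const,
              nsmul_eq_mul]
          have hb : (0:ℝ) ≤ ∑ L ∈ largeSets A H, if Y ⊆ L \ H then w Y else 0 :=
            Finset.sum_nonneg fun L _ => hite_nonneg _ Y
          have hc2 : (2:ℝ) ≤ ((smallSets A H).card : ℝ) := by exact_mod_cast hs2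
          have hwY := hw0 Y
          simp only [hgdef]
          nlinarith
        · refine ⟨∅, Finset.empty_mem_powerset Y, ?_⟩
          have hsum : ∑ L ∈ largeSets A H, (if (∅ : Finset α) ⊆ L \ H then w ∅ else 0)
              = ((largeSets A H).card : ℝ) * w ∅ := by
            rw [Finset.sum_congr rfl (fun L _ => if_pos (Finset.empty_subset _)),
              Finset.sum_const, nsmul_eq_mul]
          have ha : (0:ℝ) ≤ ∑ M ∈ smallSets A H, if M ⊆ (∅ : Finset α) then w ∅ else 0 :=
            Finset.sum_nonneg fun M _ => hite_nonneg _ ∅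
          have hc2 : (2:ℝ) ≤ ((largeSets A H).card : ℝ) := by exact_mod_cast hl2
          have hwE := hw0 (∅ : Finset α)
          simp only [hgdef]
          nlinarith
      have hfin : (1:ℝ) < (((smallSets A H).card : ℝ) + ((largeSets A H).card : ℝ)) * p ^ i :=
        lt_of_lt_of_le hstrict hgsum
      calc (2:ℝ) ^ c = (2:ℝ) ^ c * 1 := (mul_one _).symm
        _ < (2:ℝ) ^ c * ((((smallSets A H).card : ℝ) + ((largeSets A H).card : ℝ)) * p ^ i) :=
            mul_lt_mul_of_pos_left hfin h2c0
        _ = ((2:ℝ) ^ c * p ^ i) * (((smallSets A H).card : ℝ) + ((largeSets A H).card : ℝ)) := by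
            ring
        _ = _ := by rw [hkey, one_mul]
    · push_neg at hbig
      obtain ⟨hs1, hl1⟩ := hbig
      exfalso
      have hns : (1:ℝ) ≤ ∑ T ∈ Y.powerset, g T := by
        rw [← hsum1]; exact Finset.sum_le_sum hle
      have hfin : (1:ℝ) ≤ (((smallSets A H).card : ℝ) + ((largeSets A H).card : ℝ)) * p ^ i :=
        le_trans hns hgsum
      have h2cle : (2:ℝ) ^ c ≤ ((smallSets A H).card : ℝ) + ((largeSets A H).card : ℝ) := by
        calc (2:ℝ) ^ c = (2:ℝ) ^ c * 1 := (mul_one _).symm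
          _ ≤ (2:ℝ) ^ c * ((((smallSets A H).card : ℝ) + ((largeSets A H).card : ℝ)) * p ^ i) :=
              mul_le_mul_of_nonneg_left hfin h2c0.le
          _ = ((2:ℝ) ^ c * p ^ i) * (((smallSets A H).card : ℝ) + ((largeSets A H).card : ℝ)) := by
              ring
          _ = _ := by rw [hkey, one_mul]
      have hcge : ((2:ℕ):ℝ) ≤ c := by
        have h1 : (2:ℝ) ≤ (i:ℝ) := by exact_mod_cast hi2
        have h2 : (i:ℝ) ≤ (j:ℝ) := by exact_mod_cast hij
        rw [hcdef, le_div_iff₀ hij0]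
        push_cast
        nlinarith
      have h4c : (4:ℝ) ≤ (2:ℝ) ^ c := by
        calc (4:ℝ) = (2:ℝ) ^ ((2:ℕ):ℝ) := by rw [Real.rpow_natCast]; norm_num
          _ ≤ (2:ℝ) ^ c := Real.rpow_le_rpow_of_exponent_le one_le_two hcge
      have hsla : ((smallSets A H).card : ℝ) ≤ 1 := by
        exact_mod_cast Nat.lt_succ_iff.mp hs1
      have hslb : ((largeSets A H).card : ℝ) ≤ 1 := by
        exact_mod_cast Nat.lt_succ_iff.mp hl1
      linarith
  exact_mod_cast hgoal
end

section
/- For every integer n ≥ 9 there exists a saturated 7-Sperner system F ⊆ P([n]) with |F| = 56. -/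
open Finset

namespace Sat56

def Qmask : List ℕ := [0, 1, 2, 3, 4, 6, 11, 16, 17, 24, 28, 29, 32, 33, 34, 37, 50, 65, 68, 70, 81, 86, 94, 96, 104, 105, 114, 141, 151, 172, 174, 175, 180, 183, 185, 187, 190, 191, 200, 202, 205, 207, 210, 218, 219, 227, 231, 238, 239, 244, 245, 247, 251, 252, 253, 255]

def rkT : List ℕ := [0, 1, 1, 2, 1, 0, 2, 0, 0, 0, 0, 3, 0, 0, 0, 0, 1, 2, 0, 0, 0, 0, 0, 0, 2, 0, 0, 0, 3, 4, 0, 0, 1, 2, 2, 0, 0, 3, 0, 0, 0, 0, 0, 0, 0, 0, 0, 0, 0, 0, 3, 0, 0, 0, 0, 0, 0, 0, 0, 0, 0, 0, 0, 0, 0, 2, 0, 0, 2, 0, 3, 0, 0, 0, 0, 0, 0, 0, 0, 0, 0, 3, 0, 0, 0, 0, 4, 0, 0, 0, 0, 0, 0, 0, 5, 0, 2, 0, 0, 0, 0, 0, 0, 0, 3, 4, 0, 0, 0, 0, 0, 0, 0, 0, 4, 0, 0, 0, 0, 0, 0, 0, 0, 0, 0, 0, 0, 0, 0, 0, 0, 0,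 0, 0, 0, 0, 0, 0, 0, 0, 0, 2, 0, 0, 0, 0, 0, 0, 0, 0, 0, 3, 0, 0, 0, 0, 0, 0, 0, 0, 0, 0, 0, 0, 0, 0, 0, 0, 0, 0, 0, 0, 2, 0, 3, 4, 0, 0, 0, 0, 2, 0, 0, 4, 0, 3, 0, 4, 0, 0, 4, 5, 0, 0, 0, 0, 0, 0, 0, 0, 1, 0, 2, 0, 0, 3, 0, 4, 0, 0, 2, 0, 0, 0, 0, 0, 0, 0, 3, 4, 0, 0, 0, 0, 0, 0, 0, 3, 0, 0, 0, 4, 0, 0, 0, 0, 0, 0, 4, 5, 0, 0, 0, 0, 3, 4, 0, 5, 0, 0, 0, 5, 4, 5, 0, 6]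

def tA : List (ℕ × List ℕ) :=
  [(0, []),
   (0, []),
   (0, []),
   (0, []),
   (0, []),
   (2, [0, 1, 141, 205, 207, 239, 255]),
   (0, []),
   (3, [0, 1, 3, 151, 183, 191, 255]),
   (1, [0, 200, 202, 218, 219, 251, 255]),
   (2, [0, 1, 141, 205, 207, 239, 255]),
   (2, [0, 2, 202, 218, 219, 251, 255]),
   (0, []),
   (2, [0, 4, 141, 205, 207, 239, 255]),
   (2, [0, 1, 141, 205, 207, 239, 255]),
   (3, [0, 2, 6, 174, 175, 191, 255]),
   (4, [0, 1, 3, 11, 175, 191, 255]),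
   (0, []),
   (0, []),
   (2, [0, 2, 210, 218, 219, 251, 255]),
   (3, [0, 1, 3, 151, 183, 191, 255]),
   (2, [0, 4, 180, 244, 245, 247, 255]),
   (3, [0, 1, 17, 151, 183, 191, 255]),
   (3, [0, 2, 6, 151, 183, 191, 255]),
   (3, [0, 1, 3, 151, 183, 191, 255]),
   (0, []),
   (3, [0, 1, 17, 185, 187, 191, 255]),
   (3, [0, 16, 24, 218, 219, 251, 255]),
   (4, [0, 1, 3, 11, 187, 191, 255]),
   (0, []),
   (0, []),
   (4, [0, 16, 24, 28, 190, 191, 255]),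
   (5, [0, 16, 24, 28, 29, 191, 255]),
   (0, []),
   (0, []),
   (0, []),
   (3, [0, 1, 3, 227, 231, 239, 255]),
   (2, [0, 4, 172, 174, 175, 191, 255]),
   (0, []),
   (3, [0, 2, 6, 174, 175, 191, 255]),
   (4, [0, 1, 33, 37, 175, 191, 255]),
   (2, [0, 32, 172, 174, 175, 191, 255]),
   (3, [0, 1, 33, 185, 187, 191, 255]),
   (3, [0, 2, 34, 174, 175, 191, 255]),
   (4, [0, 1, 3, 11, 175, 191, 255]),
   (2, [0, 4, 172, 174, 175, 191, 255]),
   (4, [0, 1, 33, 37, 175, 191, 255]),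
   (3, [0, 2, 6, 174, 175, 191, 255]),
   (4, [0, 1, 3, 11, 175, 191, 255]),
   (2, [0, 16, 180, 244, 245, 247, 255]),
   (3, [0, 1, 17, 185, 187, 191, 255]),
   (0, []),
   (4, [0, 2, 34, 50, 183, 191, 255]),
   (2, [0, 4, 180, 244, 245, 247, 255]),
   (4, [0, 1, 33, 37, 183, 191, 255]),
   (4, [0, 2, 34, 50, 183, 191, 255]),
   (4, [0, 1, 33, 37, 183, 191, 255]),
   (3, [0, 16, 24, 185, 187, 191, 255]),
   (3, [0, 1, 17, 185, 187, 191, 255]),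
   (4, [0, 2, 34, 50, 187, 191, 255]),
   (4, [0, 1, 3, 11, 187, 191, 255]),
   (4, [0, 16, 24, 28, 190, 191, 255]),
   (5, [0, 16, 24, 28, 29, 191, 255]),
   (4, [0, 16, 24, 28, 190, 191, 255]),
   (5, [0, 16, 24, 28, 29, 191, 255]),
   (1, [0, 200, 202, 218, 219, 251, 255]),
   (0, []),
   (2, [0, 2, 202, 218, 219, 251, 255]),
   (3, [0, 1, 3, 227, 231, 239, 255]),
   (0, []),
   (3, [0, 1, 65, 205, 207, 239, 255]),
   (0, []),
   (4, [0, 2, 6, 70, 207, 239, 255]),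
   (1, [0, 200, 202, 218, 219, 251, 255]),
   (3, [0, 1, 65, 205, 207, 239, 255]),
   (2, [0, 2, 202, 218, 219, 251, 255]),
   (4, [0, 1, 3, 11, 207, 239, 255]),
   (3, [0, 4, 68, 205, 207, 239, 255]),
   (3, [0, 1, 65, 205, 207, 239, 255]),
   (4, [0, 2, 6, 70, 207, 239, 255]),
   (4, [0, 1, 3, 11, 207, 239, 255]),
   (2, [0, 16, 210, 218, 219, 251, 255]),
   (0, []),
   (2, [0, 2, 210, 218, 219, 251, 255]),
   (4, [0, 1, 17, 81, 219, 251, 255]),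
   (3, [0, 4, 68, 244, 245, 247, 255]),
   (4, [0, 1, 17, 81, 245, 247, 255]),
   (0, []),
   (5, [0, 2, 6, 70, 86, 247, 255]),
   (3, [0, 16, 24, 218, 219, 251, 255]),
   (4, [0, 1, 17, 81, 219, 251, 255]),
   (3, [0, 16, 24, 218, 219, 251, 255]),
   (4, [0, 1, 3, 11, 219, 251, 255]),
   (4, [0, 16, 24, 28, 252, 253, 255]),
   (5, [0, 16, 24, 28, 29, 253, 255]),
   (0, []),
   (6, [0, 2, 6, 70, 86, 94, 255]),
   (0, []),
   (3, [0, 1, 33, 227, 231, 239, 255]),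
   (3, [0, 2, 34, 227, 231, 239, 255]),
   (3, [0, 1, 3, 227, 231, 239, 255]),
   (3, [0, 4, 68, 244, 245, 247, 255]),
   (4, [0, 1, 33, 37, 231, 239, 255]),
   (4, [0, 2, 6, 70, 231, 239, 255]),
   (4, [0, 1, 33, 37, 231, 239, 255]),
   (0, []),
   (0, []),
   (4, [0, 32, 96, 104, 238, 239, 255]),
   (5, [0, 32, 96, 104, 105, 239, 255]),
   (4, [0, 32, 96, 104, 238, 239, 255]),
   (5, [0, 32, 96, 104, 105, 239, 255]),
   (4, [0, 2, 6, 70, 238, 239, 255]),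
   (5, [0, 32, 96, 104, 105, 239, 255]),
   (3, [0, 32, 96, 244, 245, 247, 255]),
   (4, [0, 1, 17, 81, 245, 247, 255]),
   (0, []),
   (5, [0, 2, 34, 50, 114, 247, 255]),
   (3, [0, 4, 68, 244, 245, 247, 255]),
   (4, [0, 1, 33, 37, 245, 247, 255]),
   (5, [0, 2, 6, 70, 86, 247, 255]),
   (5, [0, 2, 6, 70, 86, 247, 255]),
   (4, [0, 32, 96, 104, 252, 253, 255]),
   (5, [0, 32, 96, 104, 105, 251, 255]),
   (5, [0, 2, 34, 50, 114, 251, 255]),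
   (5, [0, 32, 96, 104, 105, 251, 255]),
   (4, [0, 16, 24, 28, 252, 253, 255]),
   (5, [0, 16, 24, 28, 29, 253, 255]),
   (6, [0, 2, 6, 70, 86, 94, 255]),
   (6, [0, 2, 6, 70, 86, 94, 255]),
   (1, [0, 200, 202, 218, 219, 251, 255]),
   (2, [0, 1, 141, 205, 207, 239, 255]),
   (2, [0, 2, 202, 218, 219, 251, 255]),
   (3, [0, 1, 3, 151, 183, 191, 255]),
   (2, [0, 4, 141, 205, 207, 239, 255]),
   (2, [0, 1, 141, 205, 207, 239, 255]),
   (3, [0, 2, 6, 151, 183, 191, 255]),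
   (3, [0, 1, 3, 151, 183, 191, 255]),
   (1, [0, 200, 202, 218, 219, 251, 255]),
   (2, [0, 1, 141, 205, 207, 239, 255]),
   (2, [0, 2, 202, 218, 219, 251, 255]),
   (4, [0, 1, 3, 11, 175, 191, 255]),
   (2, [0, 4, 141, 205, 207, 239, 255]),
   (0, []),
   (3, [0, 2, 6, 174, 175, 191, 255]),
   (4, [0, 1, 3, 11, 175, 191, 255]),
   (2, [0, 16, 180, 244, 245, 247, 255]),
   (3, [0, 1, 17, 151, 183, 191, 255]),
   (2, [0, 2, 210, 218, 219, 251, 255]),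
   (3, [0, 1, 3, 151, 183, 191, 255]),
   (2, [0, 4, 180, 244, 245, 247, 255]),
   (3, [0, 1, 17, 151, 183, 191, 255]),
   (3, [0, 2, 6, 151, 183, 191, 255]),
   (0, []),
   (3, [0, 16, 24, 185, 187, 191, 255]),
   (3, [0, 1, 17, 185, 187, 191, 255]),
   (3, [0, 16, 24, 218, 219, 251, 255]),
   (4, [0, 1, 3, 11, 187, 191, 255]),
   (4, [0, 16, 24, 28, 190, 191, 255]),
   (5, [0, 16, 24, 28, 29, 191, 255]),
   (4, [0, 16, 24, 28, 190, 191, 255]),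
   (5, [0, 16, 24, 28, 29, 191, 255]),
   (2, [0, 32, 172, 174, 175, 191, 255]),
   (3, [0, 1, 33, 185, 187, 191, 255]),
   (3, [0, 2, 34, 174, 175, 191, 255]),
   (3, [0, 1, 3, 227, 231, 239, 255]),
   (2, [0, 4, 172, 174, 175, 191, 255]),
   (4, [0, 1, 33, 37, 175, 191, 255]),
   (3, [0, 2, 6, 174, 175, 191, 255]),
   (4, [0, 1, 33, 37, 175, 191, 255]),
   (2, [0, 32, 172, 174, 175, 191, 255]),
   (3, [0, 1, 33, 185, 187, 191, 255]),
   (3, [0, 2, 34, 174, 175, 191, 255]),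
   (4, [0, 1, 3, 11, 175, 191, 255]),
   (0, []),
   (4, [0, 1, 33, 37, 175, 191, 255]),
   (0, []),
   (0, []),
   (2, [0, 16, 180, 244, 245, 247, 255]),
   (3, [0, 1, 17, 185, 187, 191, 255]),
   (4, [0, 2, 34, 50, 183, 191, 255]),
   (4, [0, 2, 34, 50, 183, 191, 255]),
   (0, []),
   (4, [0, 1, 33, 37, 183, 191, 255]),
   (4, [0, 2, 34, 50, 183, 191, 255]),
   (0, []),
   (3, [0, 16, 24, 185, 187, 191, 255]),
   (0, []),
   (4, [0, 2, 34, 50, 187, 191, 255]),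
   (0, []),
   (4, [0, 16, 24, 28, 190, 191, 255]),
   (5, [0, 16, 24, 28, 29, 191, 255]),
   (0, []),
   (0, []),
   (1, [0, 200, 202, 218, 219, 251, 255]),
   (3, [0, 1, 65, 205, 207, 239, 255]),
   (2, [0, 2, 202, 218, 219, 251, 255]),
   (3, [0, 1, 3, 227, 231, 239, 255]),
   (3, [0, 4, 68, 205, 207, 239, 255]),
   (3, [0, 1, 65, 205, 207, 239, 255]),
   (4, [0, 2, 6, 70, 207, 239, 255]),
   (4, [0, 2, 6, 70, 207, 239, 255]),
   (0, []),
   (3, [0, 1, 65, 205, 207, 239, 255]),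
   (0, []),
   (4, [0, 1, 3, 11, 207, 239, 255]),
   (3, [0, 4, 68, 205, 207, 239, 255]),
   (0, []),
   (4, [0, 2, 6, 70, 207, 239, 255]),
   (0, []),
   (2, [0, 16, 210, 218, 219, 251, 255]),
   (4, [0, 1, 17, 81, 219, 251, 255]),
   (0, []),
   (4, [0, 1, 17, 81, 219, 251, 255]),
   (3, [0, 4, 68, 244, 245, 247, 255]),
   (4, [0, 1, 17, 81, 245, 247, 255]),
   (5, [0, 2, 6, 70, 86, 247, 255]),
   (5, [0, 2, 6, 70, 86, 247, 255]),
   (3, [0, 16, 24, 218, 219, 251, 255]),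
   (4, [0, 1, 17, 81, 219, 251, 255]),
   (0, []),
   (0, []),
   (4, [0, 16, 24, 28, 252, 253, 255]),
   (5, [0, 16, 24, 28, 29, 253, 255]),
   (6, [0, 2, 6, 70, 86, 94, 255]),
   (6, [0, 2, 6, 70, 86, 94, 255]),
   (3, [0, 32, 96, 227, 231, 239, 255]),
   (3, [0, 1, 33, 227, 231, 239, 255]),
   (3, [0, 2, 34, 227, 231, 239, 255]),
   (0, []),
   (3, [0, 4, 68, 244, 245, 247, 255]),
   (4, [0, 1, 33, 37, 231, 239, 255]),
   (4, [0, 2, 6, 70, 231, 239, 255]),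
   (0, []),
   (4, [0, 32, 96, 104, 238, 239, 255]),
   (5, [0, 32, 96, 104, 105, 239, 255]),
   (4, [0, 32, 96, 104, 238, 239, 255]),
   (5, [0, 32, 96, 104, 105, 239, 255]),
   (4, [0, 32, 96, 104, 238, 239, 255]),
   (5, [0, 32, 96, 104, 105, 239, 255]),
   (0, []),
   (0, []),
   (3, [0, 32, 96, 244, 245, 247, 255]),
   (4, [0, 1, 17, 81, 245, 247, 255]),
   (5, [0, 2, 34, 50, 114, 247, 255]),
   (5, [0, 2, 34, 50, 114, 247, 255]),
   (0, []),
   (0, []),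
   (5, [0, 2, 6, 70, 86, 247, 255]),
   (0, []),
   (4, [0, 32, 96, 104, 252, 253, 255]),
   (5, [0, 32, 96, 104, 105, 251, 255]),
   (5, [0, 2, 34, 50, 114, 251, 255]),
   (0, []),
   (0, []),
   (0, []),
   (6, [0, 2, 6, 70, 86, 94, 255]),
   (0, [])]

def tB : List (ℕ × List ℕ) :=
  [(1, [0, 200, 202, 218, 219, 251, 255]),
   (2, [0, 1, 141, 205, 207, 239, 255]),
   (2, [0, 2, 202, 218, 219, 251, 255]),
   (3, [0, 1, 3, 151, 183, 191, 255]),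
   (2, [0, 4, 141, 205, 207, 239, 255]),
   (2, [0, 1, 141, 205, 207, 239, 255]),
   (3, [0, 2, 6, 151, 183, 191, 255]),
   (3, [0, 1, 3, 151, 183, 191, 255]),
   (1, [0, 200, 202, 218, 219, 251, 255]),
   (2, [0, 1, 141, 205, 207, 239, 255]),
   (2, [0, 2, 202, 218, 219, 251, 255]),
   (4, [0, 1, 3, 11, 175, 191, 255]),
   (2, [0, 4, 141, 205, 207, 239, 255]),
   (2, [0, 1, 141, 205, 207, 239, 255]),
   (3, [0, 2, 6, 174, 175, 191, 255]),
   (4, [0, 1, 3, 11, 175, 191, 255]),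
   (2, [0, 16, 180, 244, 245, 247, 255]),
   (3, [0, 1, 17, 151, 183, 191, 255]),
   (2, [0, 2, 210, 218, 219, 251, 255]),
   (3, [0, 1, 3, 151, 183, 191, 255]),
   (2, [0, 4, 180, 244, 245, 247, 255]),
   (3, [0, 1, 17, 151, 183, 191, 255]),
   (3, [0, 2, 6, 151, 183, 191, 255]),
   (3, [0, 1, 3, 151, 183, 191, 255]),
   (3, [0, 16, 24, 185, 187, 191, 255]),
   (3, [0, 1, 17, 185, 187, 191, 255]),
   (3, [0, 16, 24, 218, 219, 251, 255]),
   (4, [0, 1, 3, 11, 187, 191, 255]),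
   (4, [0, 16, 24, 28, 190, 191, 255]),
   (5, [0, 16, 24, 28, 29, 191, 255]),
   (4, [0, 16, 24, 28, 190, 191, 255]),
   (5, [0, 16, 24, 28, 29, 191, 255]),
   (2, [0, 32, 172, 174, 175, 191, 255]),
   (3, [0, 1, 33, 185, 187, 191, 255]),
   (3, [0, 2, 34, 174, 175, 191, 255]),
   (3, [0, 1, 3, 227, 231, 239, 255]),
   (2, [0, 4, 172, 174, 175, 191, 255]),
   (4, [0, 1, 33, 37, 175, 191, 255]),
   (3, [0, 2, 6, 174, 175, 191, 255]),
   (4, [0, 1, 33, 37, 175, 191, 255]),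
   (2, [0, 32, 172, 174, 175, 191, 255]),
   (3, [0, 1, 33, 185, 187, 191, 255]),
   (3, [0, 2, 34, 174, 175, 191, 255]),
   (4, [0, 1, 3, 11, 175, 191, 255]),
   (2, [0, 4, 172, 174, 175, 191, 255]),
   (4, [0, 1, 33, 37, 175, 191, 255]),
   (3, [0, 2, 6, 174, 175, 191, 255]),
   (4, [0, 1, 3, 11, 175, 191, 255]),
   (2, [0, 16, 180, 244, 245, 247, 255]),
   (3, [0, 1, 17, 185, 187, 191, 255]),
   (4, [0, 2, 34, 50, 183, 191, 255]),
   (4, [0, 2, 34, 50, 183, 191, 255]),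
   (2, [0, 4, 180, 244, 245, 247, 255]),
   (4, [0, 1, 33, 37, 183, 191, 255]),
   (4, [0, 2, 34, 50, 183, 191, 255]),
   (4, [0, 1, 33, 37, 183, 191, 255]),
   (3, [0, 16, 24, 185, 187, 191, 255]),
   (3, [0, 1, 17, 185, 187, 191, 255]),
   (4, [0, 2, 34, 50, 187, 191, 255]),
   (4, [0, 1, 3, 11, 187, 191, 255]),
   (4, [0, 16, 24, 28, 190, 191, 255]),
   (5, [0, 16, 24, 28, 29, 191, 255]),
   (4, [0, 16, 24, 28, 190, 191, 255]),
   (5, [0, 16, 24, 28, 29, 191, 255]),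
   (1, [0, 200, 202, 218, 219, 251, 255]),
   (3, [0, 1, 65, 205, 207, 239, 255]),
   (2, [0, 2, 202, 218, 219, 251, 255]),
   (3, [0, 1, 3, 227, 231, 239, 255]),
   (3, [0, 4, 68, 205, 207, 239, 255]),
   (3, [0, 1, 65, 205, 207, 239, 255]),
   (4, [0, 2, 6, 70, 207, 239, 255]),
   (4, [0, 2, 6, 70, 207, 239, 255]),
   (1, [0, 200, 202, 218, 219, 251, 255]),
   (3, [0, 1, 65, 205, 207, 239, 255]),
   (2, [0, 2, 202, 218, 219, 251, 255]),
   (4, [0, 1, 3, 11, 207, 239, 255]),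
   (3, [0, 4, 68, 205, 207, 239, 255]),
   (3, [0, 1, 65, 205, 207, 239, 255]),
   (4, [0, 2, 6, 70, 207, 239, 255]),
   (4, [0, 1, 3, 11, 207, 239, 255]),
   (2, [0, 16, 210, 218, 219, 251, 255]),
   (4, [0, 1, 17, 81, 219, 251, 255]),
   (2, [0, 2, 210, 218, 219, 251, 255]),
   (4, [0, 1, 17, 81, 219, 251, 255]),
   (3, [0, 4, 68, 244, 245, 247, 255]),
   (4, [0, 1, 17, 81, 245, 247, 255]),
   (5, [0, 2, 6, 70, 86, 247, 255]),
   (5, [0, 2, 6, 70, 86, 247, 255]),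
   (3, [0, 16, 24, 218, 219, 251, 255]),
   (4, [0, 1, 17, 81, 219, 251, 255]),
   (3, [0, 16, 24, 218, 219, 251, 255]),
   (4, [0, 1, 3, 11, 219, 251, 255]),
   (4, [0, 16, 24, 28, 252, 253, 255]),
   (5, [0, 16, 24, 28, 29, 253, 255]),
   (6, [0, 2, 6, 70, 86, 94, 255]),
   (6, [0, 2, 6, 70, 86, 94, 255]),
   (3, [0, 32, 96, 227, 231, 239, 255]),
   (3, [0, 1, 33, 227, 231, 239, 255]),
   (3, [0, 2, 34, 227, 231, 239, 255]),
   (3, [0, 1, 3, 227, 231, 239, 255]),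
   (3, [0, 4, 68, 244, 245, 247, 255]),
   (4, [0, 1, 33, 37, 231, 239, 255]),
   (4, [0, 2, 6, 70, 231, 239, 255]),
   (4, [0, 1, 33, 37, 231, 239, 255]),
   (4, [0, 32, 96, 104, 238, 239, 255]),
   (5, [0, 32, 96, 104, 105, 239, 255]),
   (4, [0, 32, 96, 104, 238, 239, 255]),
   (5, [0, 32, 96, 104, 105, 239, 255]),
   (4, [0, 32, 96, 104, 238, 239, 255]),
   (5, [0, 32, 96, 104, 105, 239, 255]),
   (4, [0, 2, 6, 70, 238, 239, 255]),
   (5, [0, 32, 96, 104, 105, 239, 255]),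
   (3, [0, 32, 96, 244, 245, 247, 255]),
   (4, [0, 1, 17, 81, 245, 247, 255]),
   (5, [0, 2, 34, 50, 114, 247, 255]),
   (5, [0, 2, 34, 50, 114, 247, 255]),
   (3, [0, 4, 68, 244, 245, 247, 255]),
   (4, [0, 1, 33, 37, 245, 247, 255]),
   (5, [0, 2, 6, 70, 86, 247, 255]),
   (5, [0, 2, 6, 70, 86, 247, 255]),
   (4, [0, 32, 96, 104, 252, 253, 255]),
   (5, [0, 32, 96, 104, 105, 251, 255]),
   (5, [0, 2, 34, 50, 114, 251, 255]),
   (5, [0, 32, 96, 104, 105, 251, 255]),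
   (4, [0, 16, 24, 28, 252, 253, 255]),
   (5, [0, 16, 24, 28, 29, 253, 255]),
   (6, [0, 2, 6, 70, 86, 94, 255]),
   (6, [0, 2, 6, 70, 86, 94, 255])]

def gD (l : List ℕ) (i : ℕ) : ℕ := l.getD i 0

def rk (m : ℕ) : ℕ := rkT.getD m 0

def GoodM (q top : ℕ) (e : ℕ × List ℕ) : Prop :=
  e.1 ≤ 7 ∧
  (∀ i < 6, gD e.2 i ≠ gD e.2 (i + 1) ∧ gD e.2 i &&& gD e.2 (i + 1) = gD e.2 i) ∧
  (∀ i < 7, gD e.2 i ∈ Qmask) ∧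
  (1 ≤ e.1 → gD e.2 (e.1 - 1) &&& q = gD e.2 (e.1 - 1)) ∧
  (e.1 ≤ 6 → top &&& gD e.2 e.1 = top)

instance (q top : ℕ) (e : ℕ × List ℕ) : Decidable (GoodM q top e) := by
  unfold GoodM; infer_instance

set_option maxRecDepth 100000

lemma D1 : Qmask.Nodup := by decide

lemma D2 : ∀ m ∈ Qmask, m < 256 := by decide

lemma D3 : ∀ p ∈ Qmask, ∀ q ∈ Qmask, p ≠ q → p &&& q = p → rk p < rk q := by decide

lemma D4 : ∀ p ∈ Qmask, rk p ≤ 6 := by decide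

lemma D5 : ∀ m < 256, m ∉ Qmask → GoodM m m (tA.getD m (0, [])) := by decide

lemma D6 : ∀ m < 128, GoodM m (m ||| 128) (tB.getD m (0, [])) := by decide

lemma DQlen : Qmask.length = 56 := by decide

/-! ### Blocks and the lifting map -/

def blk (n i : ℕ) : Finset ℕ := if i = 7 then Finset.Icc 8 n else {i + 1}

def phi (n m : ℕ) : Finset ℕ :=
  (Finset.range 8).biUnion fun i => if m.testBit i then blk n i else ∅

lemma mem_phi {n m x : ℕ} :
    x ∈ phi n m ↔ ∃ i, i < 8 ∧ m.testBit i = true ∧ x ∈ blk n i := by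
  simp only [phi, Finset.mem_biUnion, Finset.mem_range]
  constructor
  · rintro ⟨i, hi, hx⟩
    by_cases hb : m.testBit i
    · exact ⟨i, hi, hb, by rwa [if_pos hb] at hx⟩
    · rw [if_neg hb] at hx; exact absurd hx (Finset.notMem_empty x)
  · rintro ⟨i, hi, hb, hx⟩
    exact ⟨i, hi, by rwa [if_pos hb]⟩

lemma blk_nonempty {n : ℕ} (hn : 9 ≤ n) (i : ℕ) : (blk n i).Nonempty := by
  unfold blk; split
  · exact ⟨8, by simp only [Finset.mem_Icc]; omega⟩
  · exact ⟨i + 1, Finset.mem_singleton_self _⟩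

lemma blk_subset {n : ℕ} (hn : 9 ≤ n) {i : ℕ} (hi : i < 8) : blk n i ⊆ Finset.Icc 1 n := by
  unfold blk; split
  · exact Finset.Icc_subset_Icc (by omega) le_rfl
  · intro x hx
    rw [Finset.mem_singleton] at hx
    subst hx
    rw [Finset.mem_Icc]
    omega

lemma blk_disjoint {n i j x : ℕ} (hi : i < 8) (hj : j < 8) (hij : i ≠ j)
    (hxi : x ∈ blk n i) (hxj : x ∈ blk n j) : False := by
  unfold blk at hxi hxj
  by_cases h7i : i = 7 <;> by_cases h7j : j = 7 <;>
    simp only [h7i, h7j, if_pos, if_neg, if_true, if_false, reduceIte,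
      Finset.mem_Icc, Finset.mem_singleton] at hxi hxj <;> omega

lemma blk_sub_phi {n m i : ℕ} (hi : i < 8) (hb : m.testBit i = true) : blk n i ⊆ phi n m :=
  fun x hx => mem_phi.2 ⟨i, hi, hb, hx⟩

lemma testBit_high {m i : ℕ} (hm : m < 256) (hi : 8 ≤ i) : m.testBit i = false := by
  apply Nat.testBit_lt_two_pow
  calc m < 256 := hm
    _ = 2 ^ 8 := by norm_num
    _ ≤ 2 ^ i := Nat.pow_le_pow_right (by norm_num) hi

lemma phi_mono {n p r : ℕ} (h : p &&& r = p) : phi n p ⊆ phi n r := by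
  intro x hx
  obtain ⟨i, hi, hb, hxi⟩ := mem_phi.1 hx
  have hbr : r.testBit i = true := by
    have := congrArg (fun t => t.testBit i) h
    simp only [Nat.testBit_and, hb, Bool.true_and] at this
    exact this
  exact mem_phi.2 ⟨i, hi, hbr, hxi⟩

lemma phi_sub_reflect {n p r : ℕ} (hn : 9 ≤ n) (hp : p < 256)
    (h : phi n p ⊆ phi n r) : p &&& r = p := by
  apply Nat.eq_of_testBit_eq
  intro i
  rw [Nat.testBit_and]
  by_cases hi : i < 8
  · cases hb : p.testBit i
    · simp
    · obtain ⟨x, hx⟩ := blk_nonempty hn i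
      have hxp : x ∈ phi n p := blk_sub_phi hi hb hx
      obtain ⟨j, hj, hbj, hxj⟩ := mem_phi.1 (h hxp)
      by_cases hij : i = j
      · subst hij; simp [hbj]
      · exact absurd (blk_disjoint hi hj hij hx hxj) (by simp)
  · rw [testBit_high hp (by omega)]
    simp

lemma phi_inj {n p r : ℕ} (hn : 9 ≤ n) (hp : p < 256) (hr : r < 256)
    (h : phi n p = phi n r) : p = r := by
  have h1 : p &&& r = p := phi_sub_reflect hn hp (h ▸ Finset.Subset.refl _)
  have h2 : r &&& p = r := phi_sub_reflect hn hr (h ▸ Finset.Subset.refl _)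
  rw [← h1, Nat.land_comm, h2]

lemma phi_subset_Icc {n m : ℕ} (hn : 9 ≤ n) : phi n m ⊆ Finset.Icc 1 n := by
  intro x hx
  obtain ⟨i, hi, _, hxi⟩ := mem_phi.1 hx
  exact blk_subset hn hi hxi

/-! ### Masks from a subset `S` -/

def mkm (P : ℕ → Bool) : ℕ → ℕ
  | 0 => 0
  | k + 1 => mkm P k ||| (if P k then 2 ^ k else 0)

lemma mkm_testBit (P : ℕ → Bool) : ∀ k j, (mkm P k).testBit j = (decide (j < k) && P j) := by
  intro k
  induction k with
  | zero => intro j; simp [mkm]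
  | succ k ih =>
    intro j
    simp only [mkm, Nat.testBit_or, ih]
    rcases lt_trichotomy j k with h | h | h
    · have h1 : decide (j < k) = true := by simp [h]
      have h2 : decide (j < k + 1) = true := by simp; omega
      have h3 : (if P k then 2 ^ k else 0).testBit j = false := by
        split
        · rw [Nat.testBit_two_pow]; simp; omega
        · simp
      rw [h1, h2, h3, Bool.or_false]
    · subst h
      have h1 : decide (j < j) = false := by simp
      have h2 : decide (j < j + 1) = true := by simp
      have h3 : (if P j then 2 ^ j else 0).testBit j = (P j) := by
        split <;> rename_i hPj
        · rw [Nat.testBit_two_pow]; simp [hPj]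
        · simp [hPj]
      rw [h1, h2, h3, Bool.false_and, Bool.false_or, Bool.true_and]
    · have h1 : decide (j < k) = false := by simp; omega
      have h2 : decide (j < k + 1) = false := by simp; omega
      have h3 : (if P k then 2 ^ k else 0).testBit j = false := by
        split
        · rw [Nat.testBit_two_pow]; simp; omega
        · simp
      rw [h1, h2, h3]; rfl

lemma mkm_lt (P : ℕ → Bool) : mkm P 8 < 256 := by
  have : (256 : ℕ) = 2 ^ 8 := by norm_num
  rw [this]
  apply Nat.lt_pow_two_of_testBit
  intro i hi
  rw [mkm_testBit]
  have : decide (i < 8) = false := by simp; omega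
  rw [this, Bool.false_and]

def qlo (n : ℕ) (S : Finset ℕ) : ℕ := mkm (fun i => decide (blk n i ⊆ S)) 8

def qhi (n : ℕ) (S : Finset ℕ) : ℕ := mkm (fun i => decide ((blk n i ∩ S).Nonempty)) 8

lemma qlo_testBit {n : ℕ} {S : Finset ℕ} {i : ℕ} (hi : i < 8) :
    (qlo n S).testBit i = decide (blk n i ⊆ S) := by
  rw [qlo, mkm_testBit]
  simp [hi]

lemma qhi_testBit {n : ℕ} {S : Finset ℕ} {i : ℕ} (hi : i < 8) :
    (qhi n S).testBit i = decide ((blk n i ∩ S).Nonempty) := by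
  rw [qhi, mkm_testBit]
  simp [hi]

lemma qlo_lt {n : ℕ} {S : Finset ℕ} : qlo n S < 256 := mkm_lt _

lemma qhi_lt {n : ℕ} {S : Finset ℕ} : qhi n S < 256 := mkm_lt _

lemma phi_qlo_sub {n : ℕ} {S : Finset ℕ} : phi n (qlo n S) ⊆ S := by
  intro x hx
  obtain ⟨i, hi, hb, hxi⟩ := mem_phi.1 hx
  rw [qlo_testBit hi] at hb
  exact (of_decide_eq_true hb) hxi

lemma cover {n x : ℕ} (hn : 9 ≤ n) (hx : x ∈ Finset.Icc 1 n) : ∃ i, i < 8 ∧ x ∈ blk n i := by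
  rw [Finset.mem_Icc] at hx
  by_cases h : x ≤ 7
  · refine ⟨x - 1, by omega, ?_⟩
    unfold blk
    rw [if_neg (by omega), Finset.mem_singleton]
    omega
  · refine ⟨7, by omega, ?_⟩
    unfold blk
    rw [if_pos rfl, Finset.mem_Icc]
    omega

lemma sub_phi_qhi {n : ℕ} {S : Finset ℕ} (hn : 9 ≤ n) (hS : S ⊆ Finset.Icc 1 n) :
    S ⊆ phi n (qhi n S) := by
  intro x hx
  obtain ⟨i, hi, hxi⟩ := cover hn (hS hx)
  have hb : (qhi n S).testBit i = true := by
    rw [qhi_testBit hi]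
    exact decide_eq_true ⟨x, Finset.mem_inter.2 ⟨hxi, hx⟩⟩
  exact mem_phi.2 ⟨i, hi, hb, hxi⟩

lemma philo_iff {n p : ℕ} {S : Finset ℕ} (hn : 9 ≤ n) (hp : p < 256) :
    phi n p ⊆ S ↔ p &&& qlo n S = p := by
  constructor
  · intro h
    apply Nat.eq_of_testBit_eq
    intro i
    rw [Nat.testBit_and]
    by_cases hi : i < 8
    · cases hb : p.testBit i
      · simp
      · have : blk n i ⊆ S := (blk_sub_phi hi hb).trans h
        simp [qlo_testBit hi, decide_eq_true this]
    · rw [testBit_high hp (by omega)]; simp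
  · intro h
    exact (phi_mono h).trans phi_qlo_sub

lemma phihi_iff {n p : ℕ} {S : Finset ℕ} (hn : 9 ≤ n) (hS : S ⊆ Finset.Icc 1 n)
    (hp : p < 256) : S ⊆ phi n p ↔ qhi n S &&& p = qhi n S := by
  constructor
  · intro h
    apply Nat.eq_of_testBit_eq
    intro i
    rw [Nat.testBit_and]
    by_cases hi : i < 8
    · cases hb : (qhi n S).testBit i
      · simp
      · rw [qhi_testBit hi] at hb
        obtain ⟨x, hx⟩ := of_decide_eq_true hb
        rw [Finset.mem_inter] at hx
        obtain ⟨j, hj, hbj, hxj⟩ := mem_phi.1 (h hx.2)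
        by_cases hij : i = j
        · subst hij; simp [hbj]
        · exact absurd (blk_disjoint hi hj hij hx.1 hxj) (by simp)
    · rw [testBit_high qhi_lt (by omega)]; simp
  · intro h
    exact (sub_phi_qhi hn hS).trans (phi_mono (by rw [Nat.land_comm] at h ⊢; exact h))

lemma dichotomy {n : ℕ} {S : Finset ℕ} (hn : 9 ≤ n) :
    qhi n S = qlo n S ∨ ((qlo n S).testBit 7 = false ∧ qhi n S = qlo n S ||| 128) := by
  have hlow : ∀ i, i < 7 → (qhi n S).testBit i = (qlo n S).testBit i := by
    intro i hi
    rw [qhi_testBit (by omega), qlo_testBit (by omega)]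
    have hblk : blk n i = {i + 1} := by unfold blk; rw [if_neg (by omega)]
    rw [hblk]
    apply decide_eq_decide.2
    constructor
    · rintro ⟨x, hx⟩
      rw [Finset.mem_inter, Finset.mem_singleton] at hx
      intro y hy
      rw [Finset.mem_singleton] at hy
      subst hy
      exact hx.1 ▸ hx.2
    · intro h
      exact ⟨i + 1, Finset.mem_inter.2 ⟨Finset.mem_singleton_self _, h (Finset.mem_singleton_self _)⟩⟩
  have hmono7 : (qlo n S).testBit 7 = true → (qhi n S).testBit 7 = true := by
    intro h
    rw [qlo_testBit (by omega)] at h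
    rw [qhi_testBit (by omega)]
    obtain ⟨x, hx⟩ := blk_nonempty hn 7
    exact decide_eq_true ⟨x, Finset.mem_inter.2 ⟨hx, (of_decide_eq_true h) hx⟩⟩
  by_cases h7 : (qhi n S).testBit 7 = (qlo n S).testBit 7
  · left
    apply Nat.eq_of_testBit_eq
    intro i
    by_cases hi : i < 7
    · exact hlow i hi
    · by_cases hi8 : i < 8
      · have : i = 7 := by omega
        rw [this]; exact h7
      · rw [testBit_high qhi_lt (by omega), testBit_high qlo_lt (by omega)]
  · right
    have hq7 : (qlo n S).testBit 7 = false := by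
      cases h : (qlo n S).testBit 7
      · rfl
      · exact absurd (by rw [hmono7 h, h]) h7
    have hh7 : (qhi n S).testBit 7 = true := by
      cases h : (qhi n S).testBit 7
      · rw [h, hq7] at h7; exact absurd rfl h7
      · rfl
    refine ⟨hq7, ?_⟩
    apply Nat.eq_of_testBit_eq
    intro i
    rw [Nat.testBit_or]
    have h128 : (128 : ℕ) = 2 ^ 7 := by norm_num
    by_cases hi : i < 7
    · rw [hlow i hi, h128, Nat.testBit_two_pow]
      have : decide (7 = i) = false := by simp; omega
      rw [this, Bool.or_false]
    · by_cases hi8 : i < 8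
      · have hieq : i = 7 := by omega
        subst hieq
        rw [hh7, h128, Nat.testBit_two_pow]
        simp
      · rw [testBit_high qhi_lt (by omega), testBit_high qlo_lt (by omega)]
        rw [h128, Nat.testBit_two_pow]
        have : decide (7 = i) = false := by simp; omega
        rw [this, Bool.or_false]

/-! ### Chain building -/

lemma buildChain (F : Finset (Finset ℕ)) (S : Finset ℕ) (c : ℕ → Finset ℕ) (a : ℕ)
    (ha : a ≤ 7)
    (hc : ∀ k, k < 6 → c k ⊂ c (k + 1)) (hm : ∀ k, k < 7 → c k ∈ F)
    (hlo : 1 ≤ a → c (a - 1) ⊂ S) (hhi : a ≤ 6 → S ⊂ c a) :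
    HasChainOfLen (insert S F) 8 := by
  set D : ℕ → Finset ℕ := fun k => if k < a then c k else if k = a then S else c (k - 1) with hD
  have adj : ∀ k, k < 7 → D k ⊂ D (k + 1) := by
    intro k hk
    rcases lt_trichotomy (k + 1) a with h | h | h
    · have hk' : k < a := by omega
      show (if k < a then c k else _) ⊂ (if k + 1 < a then c (k + 1) else _)
      rw [if_pos hk', if_pos h]
      exact hc k (by omega)
    · have hk' : k < a := by omega
      show (if k < a then c k else _) ⊂
        (if k + 1 < a then c (k + 1) else if k + 1 = a then S else _)
      rw [if_pos hk', if_neg (by omega), if_pos h]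
      have h1 := hlo (by omega)
      have h2 : a - 1 = k := by omega
      rwa [h2] at h1
    · by_cases hka : k = a
      · show (if k < a then c k else if k = a then S else _) ⊂
          (if k + 1 < a then _ else if k + 1 = a then S else c (k + 1 - 1))
        rw [if_neg (by omega), if_pos hka, if_neg (by omega), if_neg (by omega)]
        have h1 := hhi (by omega)
        have h2 : k + 1 - 1 = a := by omega
        rwa [h2]
      · have hka' : a < k := by omega
        show (if k < a then _ else if k = a then S else c (k - 1)) ⊂
          (if k + 1 < a then _ else if k + 1 = a then S else c (k + 1 - 1))
        rw [if_neg (by omega), if_neg hka, if_neg (by omega), if_neg (by omega)]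
        have h1 := hc (k - 1) (by omega)
        have h2 : k - 1 + 1 = k := by omega
        rw [h2] at h1
        have h3 : k + 1 - 1 = k := by omega
        rwa [h3]
  have mem : ∀ k, k ≤ 7 → D k ∈ insert S F := by
    intro k hk
    show (if k < a then c k else if k = a then S else c (k - 1)) ∈ insert S F
    by_cases h1 : k < a
    · rw [if_pos h1]
      exact Finset.mem_insert_of_mem (hm k (by omega))
    · rw [if_neg h1]
      by_cases h2 : k = a
      · rw [if_pos h2]; exact Finset.mem_insert_self _ _
      · rw [if_neg h2]
        exact Finset.mem_insert_of_mem (hm (k - 1) (by omega))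
  have htrans : ∀ j, j ≤ 7 → ∀ i, i < j → D i ⊂ D j := by
    intro j
    induction j with
    | zero => intro _ i hi; omega
    | succ j ih =>
      intro hj i hi
      by_cases hij : i = j
      · subst hij; exact adj i (by omega)
      · exact (ih (by omega) i (by omega)).trans (adj j (by omega))
  refine ⟨fun i => D i.val, ?_, ?_⟩
  · intro i j hij
    have h1 : (i : Fin 8).val < (j : Fin 8).val := hij
    have := htrans j.val (by omega) i.val h1
    exact this
  · intro i
    exact mem i.val (by omega)

/-! ### The family -/

def Fam (n : ℕ) : Finset (Finset ℕ) := Finset.image (phi n) Qmask.toFinset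

lemma mem_Fam {n : ℕ} {A : Finset ℕ} :
    A ∈ Fam n ↔ ∃ m ∈ Qmask, phi n m = A := by
  simp only [Fam, Finset.mem_image, List.mem_toFinset]

lemma phi_mem_Fam {n m : ℕ} (h : m ∈ Qmask) : phi n m ∈ Fam n :=
  mem_Fam.2 ⟨m, h, rfl⟩

lemma Fam_card {n : ℕ} (hn : 9 ≤ n) : (Fam n).card = 56 := by
  have hinj : Set.InjOn (phi n) Qmask.toFinset := by
    intro p hp r hr h
    rw [Finset.mem_coe, List.mem_toFinset] at hp hr
    exact phi_inj hn (D2 p hp) (D2 r hr) h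
  rw [Fam, Finset.card_image_of_injOn hinj]
  have : Qmask.toFinset.card = Qmask.dedup.length := List.card_toFinset Qmask
  rw [this, D1.dedup, DQlen]

lemma Fam_no_chain {n : ℕ} (hn : 9 ≤ n) : ¬ HasChainOfLen (Fam n) 8 := by
  rintro ⟨C, hmono, hmem⟩
  have hex : ∀ i : Fin 8, ∃ m, m ∈ Qmask ∧ phi n m = C i := by
    intro i
    obtain ⟨m, hm, heq⟩ := mem_Fam.1 (hmem i)
    exact ⟨m, hm, heq⟩
  choose m hmQ hmphi using hex
  have step : ∀ i j : Fin 8, i < j → rk (m i) < rk (m j) := by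
    intro i j hij
    have hCC : C i ⊂ C j := hmono hij
    have hsub : m i &&& m j = m i := by
      apply phi_sub_reflect hn (D2 _ (hmQ i))
      rw [hmphi i, hmphi j]
      exact hCC.subset
    have hne : m i ≠ m j := by
      intro h
      apply hCC.ne
      rw [← hmphi i, ← hmphi j, h]
    exact D3 _ (hmQ i) _ (hmQ j) hne hsub
  have h01 := step 0 1 (by decide)
  have h12 := step 1 2 (by decide)
  have h23 := step 2 3 (by decide)
  have h34 := step 3 4 (by decide)
  have h45 := step 4 5 (by decide)
  have h56 := step 5 6 (by decide)
  have h67 := step 6 7 (by decide)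
  have hle := D4 _ (hmQ 7)
  omega

lemma Fam_saturated {n : ℕ} (hn : 9 ≤ n) :
    ∀ S ⊆ Finset.Icc 1 n, S ∉ Fam n → HasChainOfLen (insert S (Fam n)) 8 := by
  intro S hS hSF
  rcases dichotomy (S := S) hn with hq | ⟨h7, hq⟩
  · -- S is a lifted set
    have hSphi : S = phi n (qlo n S) :=
      Finset.Subset.antisymm (hq ▸ sub_phi_qhi hn hS) phi_qlo_sub
    have hql : qlo n S < 256 := qlo_lt
    have hnot : qlo n S ∉ Qmask := fun h => hSF (hSphi ▸ phi_mem_Fam h)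
    obtain ⟨ha7, hcc, hcm, hlo', hhi'⟩ := D5 _ hql hnot
    set e := tA.getD (qlo n S) (0, []) with he
    apply buildChain (Fam n) S (fun k => phi n (gD e.2 k)) e.1 ha7
    · intro k hk
      rw [Finset.ssubset_iff_subset_ne]
      refine ⟨phi_mono (hcc k (by omega)).2, ?_⟩
      intro h
      exact (hcc k (by omega)).1
        (phi_inj hn (D2 _ (hcm k (by omega))) (D2 _ (hcm (k + 1) (by omega))) h)
    · intro k hk
      exact phi_mem_Fam (hcm k hk)
    · intro h1
      rw [Finset.ssubset_iff_subset_ne]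
      refine ⟨?_, ?_⟩
      · rw [hSphi]
        exact phi_mono (hlo' h1)
      · intro h
        exact hSF (h ▸ phi_mem_Fam (hcm (e.1 - 1) (by omega)))
    · intro h1
      rw [Finset.ssubset_iff_subset_ne]
      refine ⟨?_, ?_⟩
      · rw [hSphi]
        exact phi_mono (hhi' h1)
      · intro h
        exact hSF (h ▸ phi_mem_Fam (hcm e.1 (by omega)))
  · -- S partially meets the big block
    have hql : qlo n S < 128 := by
      have : (128 : ℕ) = 2 ^ 7 := by norm_num
      rw [this]
      apply Nat.lt_pow_two_of_testBit
      intro i hi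
      by_cases hi8 : i < 8
      · have : i = 7 := by omega
        rw [this]; exact h7
      · exact testBit_high qlo_lt (by omega)
    obtain ⟨ha7, hcc, hcm, hlo', hhi'⟩ := D6 _ hql
    set e := tB.getD (qlo n S) (0, []) with he
    apply buildChain (Fam n) S (fun k => phi n (gD e.2 k)) e.1 ha7
    · intro k hk
      rw [Finset.ssubset_iff_subset_ne]
      refine ⟨phi_mono (hcc k (by omega)).2, ?_⟩
      intro h
      exact (hcc k (by omega)).1
        (phi_inj hn (D2 _ (hcm k (by omega))) (D2 _ (hcm (k + 1) (by omega))) h)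
    · intro k hk
      exact phi_mem_Fam (hcm k hk)
    · intro h1
      rw [Finset.ssubset_iff_subset_ne]
      refine ⟨?_, ?_⟩
      · exact (phi_mono (hlo' h1)).trans phi_qlo_sub
      · intro h
        exact hSF (h ▸ phi_mem_Fam (hcm (e.1 - 1) (by omega)))
    · intro h1
      rw [Finset.ssubset_iff_subset_ne]
      refine ⟨?_, ?_⟩
      · refine (sub_phi_qhi hn hS).trans (phi_mono ?_)
        rw [hq]
        exact hhi' h1
      · intro h
        exact hSF (h ▸ phi_mem_Fam (hcm e.1 (by omega)))

end Sat56

theorem sat_seven_sperner_56 (n : ℕ) (hn : 9 ≤ n) :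
    ∃ F : Finset (Finset ℕ), IsSatKSperner (Finset.Icc 1 n) F 7 ∧ F.card = 56 := by
  refine ⟨Sat56.Fam n, ⟨?_, ?_, ?_⟩, Sat56.Fam_card hn⟩
  · intro A hA
    obtain ⟨m, _, heq⟩ := Sat56.mem_Fam.1 hA
    rw [← heq]
    exact Sat56.phi_subset_Icc hn
  · exact Sat56.Fam_no_chain hn
  · exact Sat56.Fam_saturated hn
end

section
/- Let L = {{1,2,6},{2,3,7},{1,3,4},{2,4,5},{3,5,6},{4,6,7},{1,5,7}} be the family of lines of the Fano plane on the point set {1,2,3,4,5,6,7}. Then every subset S ⊆ {1,…,7} either contains some line L ∈ L or is contained in the complement {1,…,7} \ L of some line L ∈ L. Consequently, L ∪ {complements of members of L} is a saturated antichain in P({1,…,7}). -/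
open Finset

/-- The lines of the Fano plane on the point set `{1,…,7}`. -/
def fanoLines : Finset (Finset ℕ) :=
  {{1, 2, 6}, {2, 3, 7}, {1, 3, 4}, {2, 4, 5}, {3, 5, 6}, {4, 6, 7}, {1, 5, 7}}

lemma chain2_iff {α : Type*} [DecidableEq α] (F : Finset (Finset α)) :
    HasChainOfLen F 2 ↔ ∃ A ∈ F, ∃ B ∈ F, A ⊂ B := by
  constructor
  · rintro ⟨C, hC, hmem⟩
    exact ⟨C 0, hmem 0, C 1, hmem 1, hC (by decide : (0 : Fin 2) < 1)⟩
  · rintro ⟨A, hA, B, hB, hAB⟩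
    refine ⟨![A, B], ?_, ?_⟩
    · intro i j hij
      fin_cases i <;> fin_cases j <;> simp_all [Finset.lt_iff_ssubset]
    · intro i; fin_cases i <;> simpa

set_option maxRecDepth 100000 in
theorem fano_saturated :
    (∀ S ⊆ Finset.Icc 1 7,
        (∃ l ∈ fanoLines, l ⊆ S) ∨ (∃ l ∈ fanoLines, S ⊆ Finset.Icc 1 7 \ l)) ∧
      IsSatKSperner (Finset.Icc 1 7)
        (fanoLines ∪ fanoLines.image (fun l => Finset.Icc 1 7 \ l)) 1 := by
  have key : ∀ S ∈ (Finset.Icc 1 7).powerset,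
      (∃ l ∈ fanoLines, l ⊆ S) ∨ (∃ l ∈ fanoLines, S ⊆ Finset.Icc 1 7 \ l) := by decide
  have key' : ∀ S ⊆ Finset.Icc 1 7,
      (∃ l ∈ fanoLines, l ⊆ S) ∨ (∃ l ∈ fanoLines, S ⊆ Finset.Icc 1 7 \ l) := fun S hS =>
    key S (Finset.mem_powerset.mpr hS)
  refine ⟨key', ?_, ?_, ?_⟩
  · decide
  · rw [chain2_iff]; decide
  · intro S hS hSF
    rw [chain2_iff]
    rcases key' S hS with ⟨l, hl, hlS⟩ | ⟨l, hl, hSl⟩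
    · have hlF : l ∈ fanoLines ∪ fanoLines.image (fun l => Finset.Icc 1 7 \ l) :=
        Finset.mem_union_left _ hl
      refine ⟨l, Finset.mem_insert_of_mem hlF, S, Finset.mem_insert_self _ _, ?_⟩
      exact hlS.ssubset_of_ne (fun h => hSF (h ▸ hlF))
    · have hcF : Finset.Icc 1 7 \ l ∈ fanoLines ∪ fanoLines.image (fun l => Finset.Icc 1 7 \ l) :=
        Finset.mem_union_right _ (Finset.mem_image_of_mem _ hl)
      refine ⟨S, Finset.mem_insert_self _ _, _, Finset.mem_insert_of_mem hcF, ?_⟩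
      exact hSl.ssubset_of_ne (fun h => hSF (h ▸ hcF))
end

section
/- Let X be a finite set and F ⊆ P(X) a family of subsets. If |X| > 2^{|F|}, then there is at least one homogeneous atom for F. Furthermore, if F is a saturated k-Sperner system and H₁ and H₂ are homogeneous atoms for F, then H₁ = H₂. -/
open Finset

/-- Key lemma: if `P` and `Q` are disjoint sets (each of size ≥ 2) having the atom
property for a saturated `k`-Sperner system `F`, then no member of `F` can contain `Q`
while being disjoint from `P`. -/
lemma key_lemma {α : Type*} [DecidableEq α] {X : Finset α} {F : Finset (Finset α)} {k : ℕ}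
    (hsat : IsSatKSperner X F k) {P Q M : Finset α}
    (hPX : P ⊆ X) (hPprop : ∀ S ∈ F, S ∩ P = ∅ ∨ S ∩ P = P) (hPcard : 2 ≤ P.card)
    (hQprop : ∀ S ∈ F, S ∩ Q = ∅ ∨ S ∩ Q = Q) (hQcard : 2 ≤ Q.card)
    (hdisj : ∀ a ∈ P, a ∉ Q) (hM : M ∈ F) (hMP : M ∩ P = ∅) (hQM : Q ⊆ M) : False := by
  obtain ⟨y₁, hy₁P, x₁, hx₁P, hne₁⟩ := Finset.one_lt_card.mp (by omega : 1 < P.card)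
  obtain ⟨y₂, hy₂Q, x₂, hx₂Q, hne₂⟩ := Finset.one_lt_card.mp (by omega : 1 < Q.card)
  have hx₁y₂ : x₁ ≠ y₂ := fun h => hdisj x₁ hx₁P (h ▸ hy₂Q)
  have hx₂y₁ : x₂ ≠ y₁ := fun h => hdisj y₁ hy₁P (h ▸ hx₂Q)
  set T : Finset α := (M ∪ P) \ {y₁, y₂} with hTdef
  have hMX : M ⊆ X := hsat.1 M hM
  have hTX : T ⊆ X := (sdiff_subset).trans (union_subset hMX hPX)
  have hx₁T : x₁ ∈ T := by
    refine mem_sdiff.mpr ⟨mem_union_right _ hx₁P, ?_⟩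
    simp only [mem_insert, mem_singleton]
    push_neg
    exact ⟨fun h => hne₁ h.symm, hx₁y₂⟩
  have hx₂T : x₂ ∈ T := by
    refine mem_sdiff.mpr ⟨mem_union_left _ (hQM hx₂Q), ?_⟩
    simp only [mem_insert, mem_singleton]
    push_neg
    exact ⟨hx₂y₁, fun h => hne₂ h.symm⟩
  have hy₁T : y₁ ∉ T := by
    simp [hTdef, mem_sdiff]
  have hy₂T : y₂ ∉ T := by
    simp [hTdef, mem_sdiff]
  have hTF : T ∉ F := by
    intro hT
    rcases hPprop T hT with h | h
    · have : x₁ ∈ T ∩ P := mem_inter.mpr ⟨hx₁T, hx₁P⟩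
      rw [h] at this; exact notMem_empty _ this
    · have : y₁ ∈ T ∩ P := h.symm ▸ hy₁P
      exact hy₁T (mem_inter.mp this).1
  -- any member inside T is strictly inside M
  have sub1 : ∀ A ∈ F, A ⊆ T → A ⊂ M := by
    intro A hA hAT
    have hAP : A ∩ P = ∅ := by
      rcases hPprop A hA with h | h
      · exact h
      · exfalso
        have : y₁ ∈ A := by
          have : y₁ ∈ A ∩ P := h.symm ▸ hy₁P
          exact (mem_inter.mp this).1
        exact hy₁T (hAT this)
    have hAQ : A ∩ Q = ∅ := by
      rcases hQprop A hA with h | h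
      · exact h
      · exfalso
        have : y₂ ∈ A := by
          have : y₂ ∈ A ∩ Q := h.symm ▸ hy₂Q
          exact (mem_inter.mp this).1
        exact hy₂T (hAT this)
    have hAM : A ⊆ M := by
      intro a ha
      have haMP : a ∈ M ∪ P := (mem_sdiff.mp (hAT ha)).1
      rcases mem_union.mp haMP with h | h
      · exact h
      · exact absurd (mem_inter.mpr ⟨ha, h⟩) (by simp [hAP])
    refine (Finset.ssubset_iff_of_subset hAM).mpr ⟨y₂, hQM hy₂Q, ?_⟩
    intro h
    exact absurd (mem_inter.mpr ⟨h, hy₂Q⟩) (by simp [hAQ])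
  -- any member containing T strictly contains M
  have sub2 : ∀ B ∈ F, T ⊆ B → M ⊂ B := by
    intro B hB hTB
    have hBP : B ∩ P = P := by
      rcases hPprop B hB with h | h
      · exfalso
        have : x₁ ∈ B ∩ P := mem_inter.mpr ⟨hTB hx₁T, hx₁P⟩
        rw [h] at this; exact notMem_empty _ this
      · exact h
    have hBQ : B ∩ Q = Q := by
      rcases hQprop B hB with h | h
      · exfalso
        have : x₂ ∈ B ∩ Q := mem_inter.mpr ⟨hTB hx₂T, hx₂Q⟩
        rw [h] at this; exact notMem_empty _ this
      · exact h
    have hPB : P ⊆ B := fun a ha => (mem_inter.mp (hBP.symm ▸ ha)).1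
    have hQB : Q ⊆ B := fun a ha => (mem_inter.mp (hBQ.symm ▸ ha)).1
    have hMB : M ⊆ B := by
      intro z hz
      by_cases hz₂ : z = y₂
      · exact hQB (hz₂ ▸ hy₂Q)
      by_cases hz₁ : z = y₁
      · exfalso
        exact absurd (mem_inter.mpr ⟨hz, hz₁ ▸ hy₁P⟩) (by simp [hMP])
      · refine hTB (mem_sdiff.mpr ⟨mem_union_left _ hz, ?_⟩)
        simp only [mem_insert, mem_singleton]
        push_neg
        exact ⟨hz₁, hz₂⟩
    refine (Finset.ssubset_iff_of_subset hMB).mpr ⟨y₁, hPB hy₁P, ?_⟩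
    intro h
    exact absurd (mem_inter.mpr ⟨h, hy₁P⟩) (by simp [hMP])
  -- chain surgery
  obtain ⟨C, hmono, hmem⟩ := hsat.2.2 T hTX hTF
  refine hsat.2.1 ⟨fun i => if C i = T then M else C i, ?_, ?_⟩
  · intro i j hij
    have h1 : C i < C j := hmono hij
    by_cases hi : C i = T <;> by_cases hj : C j = T
    · exact absurd (lt_of_eq_of_lt hi.symm (lt_of_lt_of_eq h1 hj)) (lt_irrefl T)
    · simp only [hi, if_pos rfl, if_neg hj]
      have hCjF : C j ∈ F := (mem_insert.mp (hmem j)).resolve_left hj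
      exact Finset.lt_iff_ssubset.mpr (sub2 (C j) hCjF (le_of_lt (lt_of_eq_of_lt hi.symm h1)))
    · simp only [if_neg hi, hj, if_pos rfl]
      have hCiF : C i ∈ F := (mem_insert.mp (hmem i)).resolve_left hi
      exact Finset.lt_iff_ssubset.mpr (sub1 (C i) hCiF (le_of_lt (lt_of_lt_of_eq h1 hj)))
    · simpa only [if_neg hi, if_neg hj] using h1
  · intro i
    by_cases hi : C i = T
    · simp only [hi, if_pos rfl]; exact hM
    · simp only [if_neg hi]; exact (mem_insert.mp (hmem i)).resolve_left hi

theorem homogeneous_atom_exists_unique {α : Type*} [DecidableEq α]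
    (X : Finset α) (F : Finset (Finset α)) (hF : ∀ A ∈ F, A ⊆ X) :
    (2 ^ F.card < X.card → ∃ H, IsHomogAtom X F H) ∧
      (∀ k : ℕ, IsSatKSperner X F k →
        ∀ H₁ H₂, IsHomogAtom X F H₁ → IsHomogAtom X F H₂ → H₁ = H₂) := by
  classical
  constructor
  · -- existence
    intro hcard
    have hlt : F.powerset.card < X.card := by rwa [card_powerset]
    obtain ⟨x, hx, y, hy, hxy, hfeq⟩ :=
      exists_ne_map_eq_of_card_lt_of_maps_to hlt
        (fun a _ => mem_powerset.mpr (filter_subset (fun S => a ∈ S) F))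
    have hiff : ∀ S ∈ F, (x ∈ S ↔ y ∈ S) := by
      intro S hS
      constructor
      · intro h
        have : S ∈ F.filter (fun S => y ∈ S) := hfeq ▸ mem_filter.mpr ⟨hS, h⟩
        exact (mem_filter.mp this).2
      · intro h
        have : S ∈ F.filter (fun S => x ∈ S) := hfeq.symm ▸ mem_filter.mpr ⟨hS, h⟩
        exact (mem_filter.mp this).2
    have hxyprop : ∀ S ∈ F, S ∩ ({x, y} : Finset α) = ∅ ∨ S ∩ ({x, y} : Finset α) = {x, y} := by
      intro S hS
      by_cases hxS : x ∈ S
      · right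
        have hyS : y ∈ S := (hiff S hS).mp hxS
        apply Finset.inter_eq_right.mpr
        intro a ha
        rcases mem_insert.mp ha with rfl | ha
        · exact hxS
        · exact (mem_singleton.mp ha) ▸ hyS
      · left
        have hyS : y ∉ S := fun h => hxS ((hiff S hS).mpr h)
        apply Finset.eq_empty_of_forall_notMem
        intro a ha
        obtain ⟨haS, haxy⟩ := mem_inter.mp ha
        rcases mem_insert.mp haxy with rfl | h
        · exact hxS haS
        · exact hyS ((mem_singleton.mp h) ▸ haS)
    set 𝒞 : Finset (Finset α) :=
      X.powerset.filter
        (fun B => ({x, y} : Finset α) ⊆ B ∧ ∀ S ∈ F, S ∩ B = ∅ ∨ S ∩ B = B) with h𝒞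
    have hxyX : ({x, y} : Finset α) ⊆ X := by
      intro a ha
      rcases mem_insert.mp ha with rfl | h
      · exact hx
      · exact (mem_singleton.mp h) ▸ hy
    have hxy𝒞 : ({x, y} : Finset α) ∈ 𝒞 :=
      mem_filter.mpr ⟨mem_powerset.mpr hxyX, Finset.Subset.refl _, hxyprop⟩
    obtain ⟨H, hH𝒞, hmax⟩ := 𝒞.exists_max_image (fun B => B.card) ⟨_, hxy𝒞⟩
    obtain ⟨hHX, hxyH, hHprop⟩ := mem_filter.mp hH𝒞
    refine ⟨H, mem_powerset.mp hHX, hHprop, ?_, ?_⟩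
    · intro B hBX hBprop hHB
      have hB𝒞 : B ∈ 𝒞 :=
        mem_filter.mpr ⟨mem_powerset.mpr hBX, hxyH.trans hHB, hBprop⟩
      exact Finset.eq_of_subset_of_card_le hHB (hmax B hB𝒞)
    · calc 2 = ({x, y} : Finset α).card := (Finset.card_pair hxy).symm
        _ ≤ H.card := Finset.card_le_card hxyH
  · -- uniqueness
    intro k hsat H₁ H₂ hH₁ hH₂
    obtain ⟨hH₁X, hH₁prop, hH₁max, hH₁card⟩ := hH₁
    obtain ⟨hH₂X, hH₂prop, hH₂max, hH₂card⟩ := hH₂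
    have hUprop : ∀ S ∈ F, S ∩ (H₁ ∪ H₂) = ∅ ∨ S ∩ (H₁ ∪ H₂) = H₁ ∪ H₂ := by
      intro S hS
      have hdistrib : S ∩ (H₁ ∪ H₂) = S ∩ H₁ ∪ S ∩ H₂ := Finset.inter_union_distrib_left S H₁ H₂
      by_cases hdisj : ∀ a ∈ H₁, a ∉ H₂
      · rcases hH₁prop S hS with h1 | h1 <;> rcases hH₂prop S hS with h2 | h2
        · left; rw [hdistrib, h1, h2, union_empty]
        · exact (key_lemma hsat hH₁X hH₁prop hH₁card hH₂prop hH₂card hdisj hS h1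
            (by rw [← h2]; exact inter_subset_left)).elim
        · exact (key_lemma hsat hH₂X hH₂prop hH₂card hH₁prop hH₁card
            (fun a ha h => hdisj a h ha) hS h2
            (by rw [← h1]; exact inter_subset_left)).elim
        · right; rw [hdistrib, h1, h2]
      · push_neg at hdisj
        obtain ⟨a, ha₁, ha₂⟩ := hdisj
        rcases hH₁prop S hS with h1 | h1 <;> rcases hH₂prop S hS with h2 | h2
        · left; rw [hdistrib, h1, h2, union_empty]
        · exfalso
          have haS : a ∈ S := by
            have : a ∈ S ∩ H₂ := h2.symm ▸ ha₂
            exact (mem_inter.mp this).1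
          exact absurd (mem_inter.mpr ⟨haS, ha₁⟩) (by simp [h1])
        · exfalso
          have haS : a ∈ S := by
            have : a ∈ S ∩ H₁ := h1.symm ▸ ha₁
            exact (mem_inter.mp this).1
          exact absurd (mem_inter.mpr ⟨haS, ha₂⟩) (by simp [h2])
        · right; rw [hdistrib, h1, h2]
    have hUX : H₁ ∪ H₂ ⊆ X := union_subset hH₁X hH₂X
    have e₁ : H₁ = H₁ ∪ H₂ := hH₁max _ hUX hUprop subset_union_left
    have e₂ : H₂ = H₁ ∪ H₂ := hH₂max _ hUX hUprop subset_union_right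
    exact e₁.trans e₂.symm
end

section
/- Let X be a finite set and let A ⊆ P(X) be a saturated antichain with homogeneous atom H. Then every set S ∈ P(X) \ A either contains a member of A^small or is contained in a member of A^large. -/
open Finset

theorem saturated_antichain_small_large {α : Type*} [DecidableEq α]
    (X : Finset α) (A : Finset (Finset α)) (hsat : IsSatKSperner X A 1)
    (H : Finset α) (hH : IsHomogAtom X A H) :
    ∀ S ⊆ X, S ∉ A →
      (∃ B ∈ smallSets A H, B ⊆ S) ∨ (∃ B ∈ largeSets A H, S ⊆ B) := by

  obtain ⟨hAX, hnochain, hsatur⟩ := hsat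
  obtain ⟨hHX, hhom, hmax, hcard⟩ := hH
  intro S hSX hSA
  obtain ⟨h, hh⟩ : H.Nonempty := card_pos.mp (by omega)
  set Z : Finset α := insert h (S \ H) with hZdef
  have hZX : Z ⊆ X := by
    intro a ha
    rcases mem_insert.mp ha with rfl | ha
    · exact hHX hh
    · exact hSX (mem_sdiff.mp ha).1
  have hZH : Z ∩ H ⊆ {h} := by
    intro a ha
    obtain ⟨haZ, haH⟩ := mem_inter.mp ha
    rcases mem_insert.mp haZ with rfl | haZ
    · exact mem_singleton_self _
    · exact absurd haH (mem_sdiff.mp haZ).2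
  have hZA : Z ∉ A := by
    intro hZ
    rcases hhom Z hZ with h0 | h1
    · have : h ∈ Z ∩ H := mem_inter.mpr ⟨mem_insert_self _ _, hh⟩
      simp [h0] at this
    · have : H.card ≤ 1 := by
        calc H.card = (Z ∩ H).card := by rw [h1]
        _ ≤ ({h} : Finset α).card := card_le_card hZH
        _ = 1 := card_singleton _
      omega
  obtain ⟨C, hmono, hmem⟩ := hsatur Z hZX hZA
  have h01 : C 0 ⊂ C 1 := hmono (by decide : (0 : Fin 2) < 1)
  have hm0 := mem_insert.mp (hmem 0)
  have hm1 := mem_insert.mp (hmem 1)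
  rcases hm0 with hm0 | hm0
  · -- C 0 = Z, so Z ⊊ C 1 with C 1 ∈ A : C 1 is large and S ⊆ C 1
    have hm1' : C 1 ∈ A := by
      rcases hm1 with hm1 | hm1
      · exact absurd (hm0 ▸ hm1 ▸ h01) (lt_irrefl _)
      · exact hm1
    have hhC1 : h ∈ C 1 := h01.1 (hm0 ▸ mem_insert_self _ _)
    have hlarge : H ⊆ C 1 := by
      rcases hhom _ hm1' with h0 | h1
      · exact absurd h0 (fun h0 => by
          have : h ∈ C 1 ∩ H := mem_inter.mpr ⟨hhC1, hh⟩
          simp [h0] at this)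
      · intro a ha; exact mem_inter.mp (h1 ▸ ha) |>.1
    right
    refine ⟨C 1, mem_filter.mpr ⟨hm1', hlarge⟩, fun a ha => ?_⟩
    by_cases haH : a ∈ H
    · exact hlarge haH
    · exact h01.1 (hm0 ▸ mem_insert_of_mem (mem_sdiff.mpr ⟨ha, haH⟩))
  · rcases hm1 with hm1 | hm1
    · -- C 1 = Z, C 0 ∈ A, C 0 ⊊ Z : C 0 is small and C 0 ⊆ S
      have hsub : C 0 ⊆ Z := hm1 ▸ h01.subset
      have hsmall : C 0 ∩ H = ∅ := by
        rcases hhom _ hm0 with h0 | h1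
        · exact h0
        · exfalso
          have hHZ : H ⊆ Z := fun a ha => hsub (mem_inter.mp (by rw [h1]; exact ha : a ∈ C 0 ∩ H)).1
          have : H ⊆ {h} := fun a ha => hZH (mem_inter.mpr ⟨hHZ ha, ha⟩)
          have := card_le_card this
          simp at this
          omega
      left
      refine ⟨C 0, mem_filter.mpr ⟨hm0, hsmall⟩, fun a ha => ?_⟩
      rcases mem_insert.mp (hsub ha) with rfl | ha'
      · exfalso
        have : a ∈ C 0 ∩ H := mem_inter.mpr ⟨ha, hh⟩
        simp [hsmall] at this
      · exact (mem_sdiff.mp ha').1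
    · -- both in A : contradicts no chain in A
      exact absurd ⟨C, hmono, fun i => by fin_cases i <;> assumption⟩ hnochain
end

section
/- Let X be a finite set and let (A_i)_{i=0}^{k-1} be a layered sequence of pairwise disjoint saturated antichains in P(X). Then F := ⋃_{i=0}^{k-1} A_i is a saturated k-Sperner system. -/
open Finset

section Aux

variable {α : Type*} [DecidableEq α]

lemma hasChain2 {F : Finset (Finset α)} {a b : Finset α} (ha : a ∈ F) (hb : b ∈ F)
    (hab : a ⊂ b) : HasChainOfLen F 2 := by
  refine ⟨![a, b], ?_, ?_⟩
  · intro i j hij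
    fin_cases i <;> fin_cases j <;> simp_all [Fin.lt_def]
  · intro i; fin_cases i <;> simpa

variable {X : Finset α} {k : ℕ} {A : ℕ → Finset (Finset α)}

lemma antichain_step (hsat : ∀ i < k, IsSatKSperner X (A i) 1)
    {i : ℕ} (hi : i < k) {S : Finset α} (hS : S ⊆ X) (hSn : S ∉ A i) :
    (∃ B ∈ A i, B ⊂ S) ∨ (∃ C ∈ A i, S ⊂ C) := by
  obtain ⟨-, hno, hsa⟩ := hsat i hi
  obtain ⟨C, hmono, hmem⟩ := hsa S hS hSn
  have h01 : C 0 ⊂ C 1 := hmono (by decide : (0 : Fin 2) < 1)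
  have h0 := hmem 0
  have h1 := hmem 1
  rw [mem_insert] at h0 h1
  rcases h0 with h0 | h0
  · rcases h1 with h1 | h1
    · exfalso
      rw [h0, h1] at h01
      exact lt_irrefl _ h01
    · exact Or.inr ⟨C 1, h1, h0 ▸ h01⟩
  · rcases h1 with h1 | h1
    · exact Or.inl ⟨C 0, h0, h1 ▸ h01⟩
    · exact absurd (hasChain2 h0 h1 h01) hno

lemma up_step (hsat : ∀ i < k, IsSatKSperner X (A i) 1)
    (hdisj : ∀ i < k, ∀ j < k, i ≠ j → Disjoint (A i) (A j))
    (hlay : Layered A (k - 1))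
    {i : ℕ} (hik : i + 1 < k) {C : Finset α} (hC : C ∈ A i) :
    ∃ D ∈ A (i + 1), C ⊂ D := by
  have hCX : C ⊆ X := (hsat i (by omega)).1 C hC
  have hCn : C ∉ A (i + 1) := by
    have hd := hdisj i (by omega) (i + 1) hik (by omega)
    exact fun h => Finset.disjoint_left.mp hd hC h
  rcases antichain_step hsat hik hCX hCn with ⟨B, hB, hBC⟩ | h
  · obtain ⟨B', hB', hB'B⟩ := hlay (i + 1) (by omega) (by omega) B hB
    simp only [Nat.add_sub_cancel] at hB'
    exact absurd (hasChain2 hB' hC (hB'B.trans hBC)) (hsat i (by omega)).2.1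
  · exact h

lemma down_chain (hsat : ∀ i < k, IsSatKSperner X (A i) 1)
    (hlay : Layered A (k - 1)) :
    ∀ m, m < k → ∀ B ∈ A m, ∃ f : ℕ → Finset α, f m = B ∧ (∀ j ≤ m, f j ∈ A j) ∧
      ∀ j, j + 1 ≤ m → f j ⊂ f (j + 1) := by
  intro m
  induction m with
  | zero =>
    intro _ B hB
    refine ⟨fun _ => B, rfl, ?_, by omega⟩
    intro j hj; interval_cases j; exact hB
  | succ m ih =>
    intro hm B hB
    obtain ⟨B', hB', hB'B⟩ := hlay (m + 1) (by omega) (by omega) B hB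
    simp only [Nat.add_sub_cancel] at hB'
    obtain ⟨f, hfm, hfmem, hfmono⟩ := ih (by omega) B' hB'
    refine ⟨fun j => if j ≤ m then f j else B, by simp, ?_, ?_⟩
    · intro j hj
      by_cases h : j ≤ m
      · simpa [h] using hfmem j h
      · have hj' : j = m + 1 := by omega
        subst hj'
        simpa [h] using hB
    · intro j hj
      by_cases h : j + 1 ≤ m
      · have h' : j ≤ m := by omega
        simpa [h, h'] using hfmono j h
      · have hj' : j = m := by omega
        subst hj'
        simpa [hfm] using hB'B

lemma up_chain (hsat : ∀ i < k, IsSatKSperner X (A i) 1)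
    (hdisj : ∀ i < k, ∀ j < k, i ≠ j → Disjoint (A i) (A j))
    (hlay : Layered A (k - 1))
    {i : ℕ} {C : Finset α} (hC : C ∈ A i) :
    ∀ n, i + n < k → ∃ f : ℕ → Finset α, f 0 = C ∧ (∀ j ≤ n, f j ∈ A (i + j)) ∧
      ∀ j, j + 1 ≤ n → f j ⊂ f (j + 1) := by
  intro n
  induction n with
  | zero =>
    intro _
    refine ⟨fun _ => C, rfl, ?_, by omega⟩
    intro j hj; interval_cases j; simpa using hC
  | succ n ih =>
    intro hn
    obtain ⟨f, hf0, hfmem, hfmono⟩ := ih (by omega)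
    have hfn : f n ∈ A (i + n) := hfmem n le_rfl
    obtain ⟨D, hD, hfD⟩ := up_step hsat hdisj hlay (by omega : i + n + 1 < k) hfn
    refine ⟨fun j => if j ≤ n then f j else D, by simpa using hf0, ?_, ?_⟩
    · intro j hj
      by_cases h : j ≤ n
      · simpa [h] using hfmem j h
      · have hj' : j = n + 1 := by omega
        subst hj'
        simpa [h, ← Nat.add_assoc] using hD
    · intro j hj
      by_cases h : j + 1 ≤ n
      · have h' : j ≤ n := by omega
        simpa [h, h'] using hfmono j h
      · have hj' : j = n := by omega
        have h1 : j ≤ n := by omega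
        have h2 : ¬ j + 1 ≤ n := by omega
        simp only [if_pos h1, if_neg h2]
        rw [hj']
        exact hfD

end Aux

theorem layered_antichains_are_saturated_sperner {α : Type*} [DecidableEq α]
    (X : Finset α) (k : ℕ) (A : ℕ → Finset (Finset α))
    (hsat : ∀ i < k, IsSatKSperner X (A i) 1)
    (hdisj : ∀ i < k, ∀ j < k, i ≠ j → Disjoint (A i) (A j))
    (hlay : Layered A (k - 1)) :
    IsSatKSperner X ((Finset.range k).biUnion A) k := by
  classical
  refine ⟨?_, ?_, ?_⟩
  · intro B hB
    simp only [mem_biUnion, mem_range] at hB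
    obtain ⟨i, hi, hBi⟩ := hB
    exact (hsat i hi).1 B hBi
  · rintro ⟨C, hmono, hmem⟩
    rcases Nat.eq_zero_or_pos k with hk | hk
    · subst hk
      have := hmem 0
      simp at this
    · have hfun : ∀ j : Fin (k + 1), ∃ i : Fin k, C j ∈ A i := by
        intro j
        have h := hmem j
        simp only [mem_biUnion, mem_range] at h
        obtain ⟨i, hi, h⟩ := h
        exact ⟨⟨i, hi⟩, h⟩
      choose g hg using hfun
      have hninj : ¬ Function.Injective g := by
        intro hinj
        have := Fintype.card_le_of_injective g hinj
        simp only [Fintype.card_fin] at this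
        omega
      rw [Function.not_injective_iff] at hninj
      obtain ⟨j₁, j₂, hgeq, hne⟩ := hninj
      rcases lt_or_gt_of_ne hne with h | h
      · exact (hsat (g j₁) (g j₁).2).2.1 (hasChain2 (hg j₁) (hgeq ▸ hg j₂) (hmono h))
      · exact (hsat (g j₂) (g j₂).2).2.1 (hasChain2 (hg j₂) (hgeq ▸ hg j₁) (hmono h))
  · intro S hSX hSF
    have hSnot : ∀ i < k, S ∉ A i := fun i hi h =>
      hSF (mem_biUnion.mpr ⟨i, mem_range.mpr hi, h⟩)
    set T := (range k).filter (fun i => ∃ B ∈ A i, B ⊂ S) with hTdef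
    set p : ℕ := if h : T.Nonempty then T.max' h + 1 else 0 with hpdef
    have hTlt : ∀ i ∈ T, i < k := by
      intro i hi
      rw [hTdef, mem_filter, mem_range] at hi
      exact hi.1
    have hpk : p ≤ k := by
      rw [hpdef]
      split
      · next h => exact hTlt _ (T.max'_mem h)
      · omega
    have hpmem : p ≠ 0 → ∃ B ∈ A (p - 1), B ⊂ S := by
      intro hp0
      by_cases h : T.Nonempty
      · have hm := T.max'_mem h
        have hex := (mem_filter.mp hm).2
        have hp : p - 1 = T.max' h := by rw [hpdef, dif_pos h]; omega
        rw [hp]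
        exact hex
      · exfalso
        rw [hpdef, dif_neg h] at hp0
        exact hp0 rfl
    have hnone : ∀ i, p ≤ i → i < k → ¬ ∃ B ∈ A i, B ⊂ S := by
      intro i hpi hik hex
      have hiT : i ∈ T := by
        rw [hTdef, mem_filter, mem_range]
        exact ⟨hik, hex⟩
      rw [hpdef] at hpi
      split at hpi
      · next h =>
        have := T.le_max' i hiT
        omega
      · next h => exact h ⟨i, hiT⟩
    -- down chain
    have hdown : ∃ f : ℕ → Finset α, (∀ j, j < p → f j ∈ A j) ∧
        (∀ j, j + 1 < p → f j ⊂ f (j + 1)) ∧ (∀ j, j + 1 = p → f j ⊂ S) := by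
      rcases Nat.eq_zero_or_pos p with hp0 | hp0
      · exact ⟨fun _ => ∅, by omega, by omega, by omega⟩
      · obtain ⟨B, hB, hBS⟩ := hpmem (by omega)
        obtain ⟨f, hfm, hfmem, hfmono⟩ := down_chain hsat hlay (p - 1) (by omega) B hB
        refine ⟨f, ?_, ?_, ?_⟩
        · intro j hj; exact hfmem j (by omega)
        · intro j hj; exact hfmono j (by omega)
        · intro j hj
          have : j = p - 1 := by omega
          subst this
          rw [hfm]
          exact hBS
    -- up chain
    have hup : ∃ g : ℕ → Finset α, (∀ j, j < k - p → g j ∈ A (p + j)) ∧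
        (∀ j, j + 1 < k - p → g j ⊂ g (j + 1)) ∧ (p < k → S ⊂ g 0) := by
      rcases lt_or_ge p k with hpk' | hpk'
      · have hfirst : ∃ C ∈ A p, S ⊂ C := by
          rcases antichain_step hsat hpk' hSX (hSnot p hpk') with h | h
          · exact absurd h (hnone p le_rfl hpk')
          · exact h
        obtain ⟨C0, hC0, hSC0⟩ := hfirst
        obtain ⟨g, hg0, hgmem, hgmono⟩ :=
          up_chain hsat hdisj hlay hC0 (k - p - 1) (by omega)
        refine ⟨g, ?_, ?_, ?_⟩
        · intro j hj; exact hgmem j (by omega)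
        · intro j hj; exact hgmono j (by omega)
        · intro _; rw [hg0]; exact hSC0
      · exact ⟨fun _ => ∅, by omega, by omega, by omega⟩
    obtain ⟨f, hfmem, hfmono, hftop⟩ := hdown
    obtain ⟨g, hgmem, hgmono, hgbot⟩ := hup
    set full : ℕ → Finset α := fun j => if j < p then f j else if j = p then S else g (j - (p + 1))
      with hfull
    have hmemfull : ∀ j ≤ k, full j ∈ insert S ((range k).biUnion A) := by
      intro j hj
      rw [hfull]
      rcases lt_trichotomy j p with h | h | h
      · simp only [if_pos h]
        exact mem_insert_of_mem (mem_biUnion.mpr ⟨j, mem_range.mpr (by omega), hfmem j h⟩)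
      · simp [h]
      · simp only [if_neg (by omega : ¬ j < p), if_neg (by omega : j ≠ p)]
        refine mem_insert_of_mem (mem_biUnion.mpr ⟨p + (j - (p + 1)), mem_range.mpr (by omega), ?_⟩)
        exact hgmem _ (by omega)
    have hadj : ∀ j, j + 1 ≤ k → full j ⊂ full (j + 1) := by
      intro j hj
      rw [hfull]
      rcases lt_trichotomy (j + 1) p with h | h | h
      · simp only [if_pos h, if_pos (by omega : j < p)]
        exact hfmono j h
      · simp only [if_pos (by omega : j < p), if_neg (by omega : ¬ j + 1 < p)]
        rw [if_pos h]
        exact hftop j h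
      · rcases lt_trichotomy j p with h' | h' | h'
        · omega
        · simp only [if_neg (by omega : ¬ j < p), if_pos h',
            if_neg (by omega : ¬ j + 1 < p), if_neg (by omega : j + 1 ≠ p)]
          have e : j + 1 - (p + 1) = 0 := by omega
          rw [e]
          exact hgbot (by omega)
        · simp only [if_neg (by omega : ¬ j < p), if_neg (by omega : j ≠ p),
            if_neg (by omega : ¬ j + 1 < p), if_neg (by omega : j + 1 ≠ p)]
          have e : j + 1 - (p + 1) = (j - (p + 1)) + 1 := by omega
          rw [e]
          exact hgmono _ (by omega)
    have key : ∀ a b, a < b → b ≤ k → full a ⊂ full b := by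
      intro a b
      induction b with
      | zero => omega
      | succ b ih =>
        intro hab hbk
        rcases Nat.lt_succ_iff_lt_or_eq.mp hab with h | h
        · exact (ih h (by omega)).trans (hadj b hbk)
        · subst h
          exact hadj a hbk
    refine ⟨fun j => full j, ?_, ?_⟩
    · intro i j hij
      exact key i j hij (Nat.lt_succ_iff.mp j.isLt)
    · intro j
      exact hmemfull j (Nat.lt_succ_iff.mp j.isLt)
end

section
/- Let X be a finite set and let (A_i)_{i=0}^{k-1} be a sequence of pairwise disjoint saturated antichains in P(X) which all have the same homogeneous atom H. Then (A_i)_{i=0}^{k-1} is layered if and only if (A_i^small)_{i=0}^{k-1} is layered. -/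
open Finset

section Aux
variable {α : Type*} [DecidableEq α]

lemma chain2_of {F : Finset (Finset α)} {A B : Finset α} (hA : A ∈ F) (hB : B ∈ F)
    (h : A ⊂ B) : HasChainOfLen F 2 := by
  refine ⟨![A, B], ?_, ?_⟩
  · intro i j hij
    fin_cases i <;> fin_cases j <;> first | exact absurd hij (by decide) | simpa using h
  · intro i; fin_cases i <;> simpa

lemma chain2_elim {F : Finset (Finset α)} (h : HasChainOfLen F 2) :
    ∃ A ∈ F, ∃ B ∈ F, A ⊂ B := by
  obtain ⟨C, hm, hmem⟩ := h
  exact ⟨C 0, hmem 0, C 1, hmem 1, hm (by decide : (0 : Fin 2) < 1)⟩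

lemma probe (X : Finset α) (G : Finset (Finset α)) (H W : Finset α) (x y : α)
    (hsatG : IsSatKSperner X G 1)
    (hdich : ∀ S ∈ G, S ∩ H = ∅ ∨ S ∩ H = H)
    (hx : x ∈ H) (hy : y ∈ H) (hxy : x ≠ y)
    (hWX : W ⊆ X) (hHW : H ⊆ W) (hWG : W ∉ G) :
    (∃ A ∈ G, A ∩ H = ∅ ∧ A ⊆ W \ H) ∨ (∃ C ∈ G, H ⊆ C ∧ W ⊂ C) := by
  set T : Finset α := (W \ H) ∪ {x} with hTdef
  have hxT : x ∈ T := Finset.mem_union_right _ (Finset.mem_singleton_self x)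
  have hTH : T ∩ H = {x} := by
    ext a
    simp only [hTdef, Finset.mem_inter, Finset.mem_union, Finset.mem_sdiff,
      Finset.mem_singleton]
    constructor
    · rintro ⟨h1 | h1, h2⟩
      · exact absurd h2 h1.2
      · exact h1
    · rintro rfl; exact ⟨Or.inr rfl, hx⟩
  have hTX : T ⊆ X := by
    apply Finset.union_subset ((Finset.sdiff_subset).trans hWX)
    simpa using hWX (hHW hx)
  have hTG : T ∉ G := by
    intro hmem
    rcases hdich _ hmem with h | h <;> rw [hTH] at h
    · exact Finset.singleton_ne_empty x h
    · rw [← h] at hy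
      exact hxy (Finset.mem_singleton.mp hy).symm
  obtain ⟨A, hA, B, hB, hAB⟩ := chain2_elim (hsatG.2.2 T hTX hTG)
  rcases Finset.mem_insert.mp hA with rfl | hA' <;> rcases Finset.mem_insert.mp hB with hBT | hB'
  · rw [hBT] at hAB; exact absurd hAB (ssubset_irrefl _)
  · -- A = T, T ⊂ B, B ∈ G
    have hxB : x ∈ B := hAB.subset hxT
    have hHB : H ⊆ B := by
      rcases hdich B hB' with h | h
      · exact absurd (Finset.mem_inter.mpr ⟨hxB, hx⟩) (by rw [h]; exact Finset.notMem_empty x)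
      · exact Finset.inter_eq_right.mp h
    have hWB : W ⊆ B := by
      intro a ha
      by_cases haH : a ∈ H
      · exact hHB haH
      · exact hAB.subset (Finset.mem_union_left _ (Finset.mem_sdiff.mpr ⟨ha, haH⟩))
    exact Or.inr ⟨B, hB', hHB, Finset.ssubset_iff_subset_ne.mpr
      ⟨hWB, fun h => hWG (h ▸ hB')⟩⟩
  · -- A ∈ G, A ⊂ T
    rw [hBT] at hAB
    have hAH : A ∩ H = ∅ := by
      rcases hdich A hA' with h | h
      · exact h
      · exfalso
        have hyA : y ∈ A := (Finset.inter_eq_right.mp h) hy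
        have hmem : y ∈ T ∩ H := Finset.mem_inter.mpr ⟨hAB.subset hyA, hy⟩
        rw [hTH] at hmem
        exact hxy (Finset.mem_singleton.mp hmem).symm
    have hAW : A ⊆ W \ H := by
      intro a ha
      rcases Finset.mem_union.mp (hAB.subset ha) with h | h
      · exact h
      · exfalso
        have : a ∈ A ∩ H := Finset.mem_inter.mpr ⟨ha, (Finset.mem_singleton.mp h) ▸ hx⟩
        rw [hAH] at this
        exact Finset.notMem_empty a this
    exact Or.inl ⟨A, hA', hAH, hAW⟩
  · exact absurd (chain2_of hA' hB' hAB) hsatG.2.1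

lemma step (X : Finset α) (F G : Finset (Finset α)) (H : Finset α)
    (hF : IsSatKSperner X F 1) (hG : IsSatKSperner X G 1)
    (hd : Disjoint F G)
    (hdF : ∀ S ∈ F, S ∩ H = ∅ ∨ S ∩ H = H)
    (hdG : ∀ S ∈ G, S ∩ H = ∅ ∨ S ∩ H = H)
    (hH2 : 2 ≤ H.card)
    (hSL : ∀ M ∈ smallSets F H, ∃ B ∈ smallSets G H, B ⊂ M)
    {S : Finset α} (hS : S ∈ F) : ∃ B ∈ G, B ⊂ S := by
  obtain ⟨x, hx, y, hy, hxy⟩ := Finset.one_lt_card.mp hH2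
  rcases hdF S hS with hsm | hlg
  · obtain ⟨B, hB, hBS⟩ := hSL S (Finset.mem_filter.mpr ⟨hS, hsm⟩)
    exact ⟨B, (Finset.mem_filter.mp hB).1, hBS⟩
  · have hHS : H ⊆ S := Finset.inter_eq_right.mp hlg
    have hSX := hF.1 S hS
    have hSG : S ∉ G := Finset.disjoint_left.mp hd hS
    rcases probe X G H S x y hG hdG hx hy hxy hSX hHS hSG with
      ⟨A, hA, _, hAW⟩ | ⟨C, hC, hHC, hSC⟩
    · exact ⟨A, hA, Finset.ssubset_of_subset_of_ssubset hAW
        (Finset.sdiff_ssubset hHS ⟨x, hx⟩)⟩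
    · have hCX := hG.1 C hC
      have hCF : C ∉ F := Finset.disjoint_right.mp hd hC
      rcases probe X F H C x y hF hdF hx hy hxy hCX hHC hCF with
        ⟨M, hM, hMH, hMW⟩ | ⟨M, hM, _, hCM⟩
      · exfalso
        obtain ⟨B, hB, hBM⟩ := hSL M (Finset.mem_filter.mpr ⟨hM, hMH⟩)
        have hBC : B ⊂ C := Finset.ssubset_of_ssubset_of_subset hBM
          (hMW.trans Finset.sdiff_subset)
        exact hG.2.1 (chain2_of (Finset.mem_filter.mp hB).1 hC hBC)
      · exact absurd (chain2_of hS hM (hSC.trans hCM)) hF.2.1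

end Aux


theorem layered_iff_small_layered {α : Type*} [DecidableEq α]
    (X : Finset α) (k : ℕ) (A : ℕ → Finset (Finset α)) (H : Finset α)
    (hsat : ∀ i < k, IsSatKSperner X (A i) 1)
    (hdisj : ∀ i < k, ∀ j < k, i ≠ j → Disjoint (A i) (A j))
    (hH : ∀ i < k, IsHomogAtom X (A i) H) :
    Layered A (k - 1) ↔ Layered (fun i => smallSets (A i) H) (k - 1) := by
  constructor
  · intro hl i h1 hik S hSmem
    obtain ⟨hS, hSH⟩ := Finset.mem_filter.mp hSmem
    obtain ⟨B, hB, hBS⟩ := hl i h1 hik S hS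
    refine ⟨B, Finset.mem_filter.mpr ⟨hB, ?_⟩, hBS⟩
    have : B ∩ H ⊆ S ∩ H := Finset.inter_subset_inter hBS.subset (subset_refl H)
    rw [hSH] at this
    exact Finset.subset_empty.mp this
  · intro hsl i h1 hik S hS
    have hik' : i < k := by omega
    have hik'' : i - 1 < k := by omega
    exact step X (A i) (A (i - 1)) H (hsat i hik') (hsat (i - 1) hik'')
      (hdisj i hik' (i - 1) hik'' (by omega)) (hH i hik').2.1 (hH (i - 1) hik'').2.1
      (hH i hik').2.2.2 (hsl i h1 hik) hS
end

section
/- For every integer k ≥ 1 there exists n₀ such that for every n ≥ n₀, every saturated k-Sperner system F ⊆ P([n]) satisfies |F| ≥ 2^{(k−1)/2} (i.e., |F| ≥ 2^{k/2 − 0.5}). -/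
open Finset

/-!
A family `F` separates at most `2 ^ |F|` points, so for `n ≥ 2 ^ 2 ^ k` either `|F| ≥ 2 ^ k`, or
two points `a ≠ b` of `[n]` lie in exactly the same members of `F`. In the latter case every member
of `F` is small (avoids `a, b`) or large (contains both). For `T ⊆ [n] \ {a, b}` the set `T ∪ {a}`
is not in `F`, so saturation puts it on a `(k+1)`-chain whose part below it consists of small sets
inside `T` and whose part above it consists of large sets containing `T`. Hence, for `h + c < k`,
every such `T` contains a small set of height `h` or lies in a large set of coheight `c` (heights
taken in the posets of small and of large sets). Each of these sets accounts for at most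
`2 ^ (n - 2 - min h c)` sets `T`, so there are at least `2 ^ min h c` of them. Take
`h = c = (k - 1) / 2` for odd `k`, and both `(h, c) = (k / 2 - 1, k / 2)` and `(k / 2, k / 2 - 1)`
for even `k`.
-/

open Order

section Heights

variable {β : Type*} [PartialOrder β]

theorem Order.exists_le_height_eq [WellFoundedLT β] {x : β} {n : ℕ} (h : n ≤ height x) :
    ∃ y ≤ x, height y = n := by
  obtain ⟨y, hyx, hy⟩ := exists_minimal_le_of_wellFoundedLT (fun y ↦ (n : ℕ∞) ≤ height y) x h
  exact ⟨y, hyx, height_eq_coe_iff_minimal_le_height.2 hy⟩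

theorem Order.exists_ge_coheight_eq [WellFoundedGT β] {x : β} {n : ℕ} (h : n ≤ coheight x) :
    ∃ y ≥ x, coheight y = n := by
  obtain ⟨y, hxy, hy⟩ := exists_maximal_ge_of_wellFoundedGT (fun y ↦ (n : ℕ∞) ≤ coheight y) x h
  exact ⟨y, hxy, coheight_eq_coe_iff_maximal_le_coheight.2 hy⟩

variable {P : β → Prop} [Finite (Subtype P)] {m : ℕ} {C : Fin (m + 1) → β}

theorem Order.exists_height_eq_le_of_strictMono (hC : StrictMono C) (hP : ∀ i, P (C i)) :
    ∃ y : Subtype P, y.1 ≤ C (Fin.last m) ∧ height y = m :=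
  exists_le_height_eq <| length_le_height_last
    (p := LTSeries.mk m (fun i ↦ (⟨C i, hP i⟩ : Subtype P)) fun _ _ h ↦ hC h)

theorem Order.exists_coheight_eq_ge_of_strictMono (hC : StrictMono C) (hP : ∀ i, P (C i)) :
    ∃ y : Subtype P, C 0 ≤ y.1 ∧ coheight y = m :=
  exists_ge_coheight_eq <| length_le_coheight_head
    (p := LTSeries.mk m (fun i ↦ (⟨C i, hP i⟩ : Subtype P)) fun _ _ h ↦ hC h)

end Heights

section Levels

variable {α : Type*} {G : Finset (Finset α)} {X A : Finset α} {h h' : ℕ}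

theorem height_le_card (A : G) : height A ≤ #A.1 :=
  (height_le_height_apply_of_strictMono _ (card_strictMono.comp (Subtype.strictMono_coe _)) A
    ).trans_eq (height_nat _)

variable [DecidableEq α]

theorem coheight_le_card_sdiff (hG : ∀ A ∈ G, A ⊆ X) (A : G) : coheight A ≤ #(X \ A.1) := by
  have hanti : StrictAnti fun B : G ↦ #(X \ B.1) := fun B B' hBB' ↦ by
    dsimp only
    rw [card_sdiff_of_subset (hG _ B.2), card_sdiff_of_subset (hG _ B'.2)]
    have := card_lt_card hBB'
    have := card_le_card (hG _ B'.2)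
    omega
  exact (height_le_height_apply_of_strictMono _ hanti.dual_left (OrderDual.toDual A)).trans_eq
    (height_nat _)

/-- `Order.height` counts the steps of a longest chain in `G` ending at `A`, so the minimal members
of `G` form `heightLevel G 0`. -/
noncomputable def heightLevel (G : Finset (Finset α)) (h : ℕ) : Finset (Finset α) :=
  {A ∈ G | ∃ hA : A ∈ G, height (⟨A, hA⟩ : G) = h}

noncomputable def coheightLevel (G : Finset (Finset α)) (c : ℕ) : Finset (Finset α) :=
  {A ∈ G | ∃ hA : A ∈ G, coheight (⟨A, hA⟩ : G) = c}

theorem heightLevel_subset : heightLevel G h ⊆ G := filter_subset _ _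

theorem coheightLevel_subset : coheightLevel G h ⊆ G := filter_subset _ _

theorem le_card_of_mem_heightLevel (hA : A ∈ heightLevel G h) : h ≤ #A := by
  obtain ⟨-, hAG, hAh⟩ := mem_filter.1 hA
  exact_mod_cast hAh ▸ height_le_card ⟨A, hAG⟩

theorem le_card_sdiff_of_mem_coheightLevel (hG : ∀ A ∈ G, A ⊆ X) (hA : A ∈ coheightLevel G h) :
    h ≤ #(X \ A) := by
  obtain ⟨-, hAG, hAh⟩ := mem_filter.1 hA
  exact_mod_cast hAh ▸ coheight_le_card_sdiff hG ⟨A, hAG⟩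

theorem exists_mem_heightLevel_subset {C : Fin (h + 1) → Finset α} (hC : StrictMono C)
    (hCG : ∀ i, C i ∈ G) : ∃ A ∈ heightLevel G h, A ⊆ C (Fin.last h) := by
  obtain ⟨⟨A, hAG⟩, hAC, hAh⟩ := exists_height_eq_le_of_strictMono (P := (· ∈ G)) hC hCG
  exact ⟨A, mem_filter.2 ⟨hAG, hAG, hAh⟩, hAC⟩

theorem exists_mem_coheightLevel_superset {C : Fin (h + 1) → Finset α} (hC : StrictMono C)
    (hCG : ∀ i, C i ∈ G) : ∃ A ∈ coheightLevel G h, C 0 ⊆ A := by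
  obtain ⟨⟨A, hAG⟩, hAC, hAh⟩ := exists_coheight_eq_ge_of_strictMono (P := (· ∈ G)) hC hCG
  exact ⟨A, mem_filter.2 ⟨hAG, hAG, hAh⟩, hAC⟩

theorem card_heightLevel_add_card_heightLevel_le (hh : h ≠ h') :
    #(heightLevel G h) + #(heightLevel G h') ≤ #G := by
  rw [← card_union_of_disjoint]
  · exact card_le_card (union_subset heightLevel_subset heightLevel_subset)
  · refine disjoint_filter.2 fun A _ ⟨_, hA⟩ ⟨_, hA'⟩ ↦ hh ?_
    exact_mod_cast hA.symm.trans hA'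

theorem card_coheightLevel_add_card_coheightLevel_le (hh : h ≠ h') :
    #(coheightLevel G h) + #(coheightLevel G h') ≤ #G := by
  rw [← card_union_of_disjoint]
  · exact card_le_card (union_subset coheightLevel_subset coheightLevel_subset)
  · refine disjoint_filter.2 fun A _ ⟨_, hA⟩ ⟨_, hA'⟩ ↦ hh ?_
    exact_mod_cast hA.symm.trans hA'

end Levels

theorem two_pow_le_card_add_card_of_covers {α : Type*} [DecidableEq α] {Y : Finset α}
    {𝒜 ℬ : Finset (Finset α)} {r : ℕ} (h𝒜 : ∀ A ∈ 𝒜, A ⊆ Y ∧ r ≤ #A)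
    (hℬ : ∀ B ∈ ℬ, r ≤ #(Y \ B)) (hcover : ∀ T ⊆ Y, (∃ A ∈ 𝒜, A ⊆ T) ∨ ∃ B ∈ ℬ, T ⊆ B) :
    2 ^ r ≤ #𝒜 + #ℬ := by
  have hrY : r ≤ #Y := by
    rcases hcover ∅ (empty_subset Y) with ⟨A, hA, -⟩ | ⟨B, hB, -⟩
    · exact (h𝒜 A hA).2.trans (card_le_card (h𝒜 A hA).1)
    · exact (hℬ B hB).trans (card_le_card sdiff_subset)
  have hpowerset : Y.powerset ⊆
      𝒜.biUnion (fun A ↦ Icc A Y) ∪ ℬ.biUnion (fun B ↦ (Y ∩ B).powerset) := by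
    intro T hT
    rw [mem_powerset] at hT
    rcases hcover T hT with ⟨A, hA, hAT⟩ | ⟨B, hB, hTB⟩
    · exact mem_union_left _ (mem_biUnion.2 ⟨A, hA, mem_Icc.2 ⟨hAT, hT⟩⟩)
    · exact mem_union_right _ (mem_biUnion.2 ⟨B, hB, mem_powerset.2 (subset_inter hT hTB)⟩)
  have h𝒜card : ∀ A ∈ 𝒜, #(Icc A Y) ≤ 2 ^ (#Y - r) := fun A hA ↦ by
    rw [card_Icc_finset (h𝒜 A hA).1]
    exact Nat.pow_le_pow_right two_pos (Nat.sub_le_sub_left (h𝒜 A hA).2 _)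
  have hℬcard : ∀ B ∈ ℬ, #(Y ∩ B).powerset ≤ 2 ^ (#Y - r) := fun B hB ↦ by
    rw [card_powerset]
    have := card_inter_add_card_sdiff Y B
    exact Nat.pow_le_pow_right two_pos (by have := hℬ B hB; omega)
  have hcount : 2 ^ r * 2 ^ (#Y - r) ≤ (#𝒜 + #ℬ) * 2 ^ (#Y - r) :=
    calc 2 ^ r * 2 ^ (#Y - r) = #Y.powerset := by
          rw [← pow_add, card_powerset, Nat.add_sub_cancel' hrY]
      _ ≤ #𝒜 * 2 ^ (#Y - r) + #ℬ * 2 ^ (#Y - r) :=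
        (card_le_card hpowerset).trans <| (card_union_le _ _).trans <| add_le_add
          (card_biUnion_le_card_mul _ _ _ h𝒜card) (card_biUnion_le_card_mul _ _ _ hℬcard)
      _ = (#𝒜 + #ℬ) * 2 ^ (#Y - r) := (add_mul _ _ _).symm
  exact Nat.le_of_mul_le_mul_right hcount (by positivity)

section Saturated

variable {α : Type*} [DecidableEq α] {X T : Finset α} {F : Finset (Finset α)} {k h c : ℕ}
  {a b : α}

theorem exists_pair_of_two_pow_card_lt (hXF : 2 ^ #F < #X) :
    ∃ a ∈ X, ∃ b ∈ X, a ≠ b ∧ ∀ A ∈ F, a ∈ A ↔ b ∈ A := by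
  obtain ⟨a, ha, b, hb, hab, heq⟩ := exists_ne_map_eq_of_card_lt_of_maps_to
    (t := F.powerset) (f := fun x ↦ {A ∈ F | x ∈ A}) (by rwa [card_powerset])
    (fun x _ ↦ mem_powerset.2 (filter_subset _ _))
  exact ⟨a, ha, b, hb, hab, filter_inj'.1 heq⟩

theorem card_smallSets_add_card_largeSets_le (F : Finset (Finset α)) {H : Finset α}
    (hH : H.Nonempty) : #(smallSets F H) + #(largeSets F H) ≤ #F := by
  rw [← card_union_of_disjoint]
  · exact card_le_card (union_subset (filter_subset _ _) (filter_subset _ _))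
  · refine disjoint_filter.2 fun A _ hA hHA ↦ hH.ne_empty ?_
    rwa [inter_eq_right.2 hHA] at hA

theorem exists_mem_heightLevel_or_mem_coheightLevel (hF : IsSatKSperner X F k) (ha : a ∈ X)
    (hab : a ≠ b) (hpair : ∀ A ∈ F, a ∈ A ↔ b ∈ A) (hT : T ⊆ X \ {a, b}) (hhc : h + c < k) :
    (∃ A ∈ heightLevel (smallSets F {a, b}) h, A ⊆ T) ∨
      ∃ B ∈ coheightLevel (largeSets F {a, b}) c, T ⊆ B := by
  have hbS : b ∉ insert a T := by
    simpa [hab.symm] using fun hb ↦ (mem_sdiff.1 (hT hb)).2 (by simp)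
  have hSF : insert a T ∉ F := fun hS ↦ hbS ((hpair _ hS).1 (mem_insert_self a T))
  obtain ⟨C, hC, hCF⟩ := hF.2.2 _ (insert_subset ha (hT.trans sdiff_subset)) hSF
  obtain ⟨p, hp⟩ : ∃ p, C p = insert a T := by
    by_contra! hne
    exact hF.2.1 ⟨C, hC, fun i ↦ (mem_insert.1 (hCF i)).resolve_left (hne i)⟩
  have hmemF : ∀ i ≠ p, C i ∈ F := fun i hi ↦
    (mem_insert.1 (hCF i)).resolve_left (hp ▸ hC.injective.ne hi)
  have hbelow : ∀ i < p, C i ∈ smallSets F {a, b} ∧ C i ⊆ T := fun i hi ↦ by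
    have hsub : C i ⊆ insert a T := hp ▸ (hC hi).le
    have hb : b ∉ C i := fun hb ↦ hbS (hsub hb)
    have ha : a ∉ C i := fun ha ↦ hb ((hpair _ (hmemF i hi.ne)).1 ha)
    refine ⟨mem_filter.2 ⟨hmemF i hi.ne, ?_⟩, fun x hx ↦ ?_⟩
    · simp [ha, hb]
    · exact (mem_insert.1 (hsub hx)).resolve_left (by rintro rfl; exact ha hx)
  have habove : ∀ i, p < i → C i ∈ largeSets F {a, b} ∧ T ⊆ C i := fun i hi ↦ by
    have hsub : insert a T ⊆ C i := hp ▸ (hC hi).le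
    have ha : a ∈ C i := hsub (mem_insert_self a T)
    have hb : b ∈ C i := (hpair _ (hmemF i hi.ne')).1 ha
    exact ⟨mem_filter.2 ⟨hmemF i hi.ne', insert_subset ha (singleton_subset_iff.2 hb)⟩,
      (subset_insert a T).trans hsub⟩
  by_cases hph : h < (p : ℕ)
  · left
    obtain ⟨A, hA, hAC⟩ := exists_mem_heightLevel_subset (G := smallSets F {a, b})
      (C := fun i : Fin (h + 1) ↦ C ⟨i, by omega⟩) (fun i j hij ↦ hC hij)
      (fun i ↦ (hbelow _ (Fin.lt_def.2 (by simp; omega))).1)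
    exact ⟨A, hA, hAC.trans (hbelow _ (Fin.lt_def.2 (by simp; omega))).2⟩
  · right
    obtain ⟨B, hB, hCB⟩ := exists_mem_coheightLevel_superset (G := largeSets F {a, b})
      (C := fun i : Fin (c + 1) ↦ C ⟨k - c + i, by omega⟩)
      (fun i j hij ↦ hC (by simpa using hij))
      (fun i ↦ (habove _ (Fin.lt_def.2 (by simp; omega))).1)
    exact ⟨B, hB, (habove _ (Fin.lt_def.2 (by simp; omega))).2.trans hCB⟩

theorem two_pow_min_le_card_heightLevel_add_card_coheightLevel (hF : IsSatKSperner X F k)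
    (ha : a ∈ X) (hab : a ≠ b) (hpair : ∀ A ∈ F, a ∈ A ↔ b ∈ A) (h c : ℕ) (hhc : h + c < k) :
    2 ^ min h c ≤
      #(heightLevel (smallSets F {a, b}) h) + #(coheightLevel (largeSets F {a, b}) c) := by
  refine two_pow_le_card_add_card_of_covers (Y := X \ {a, b}) (fun A hA ↦ ⟨?_, ?_⟩)
    (fun B hB ↦ ?_) fun T hT ↦ exists_mem_heightLevel_or_mem_coheightLevel hF ha hab hpair hT hhc
  · have hAs := mem_filter.1 (heightLevel_subset hA)
    exact subset_sdiff.2 ⟨hF.1 A hAs.1, disjoint_iff_inter_eq_empty.2 hAs.2⟩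
  · exact (min_le_left h c).trans (le_card_of_mem_heightLevel hA)
  · have hBl := mem_filter.1 (coheightLevel_subset hB)
    rw [sdiff_sdiff_left, sup_eq_right.2 hBl.2]
    exact (min_le_right h c).trans (le_card_sdiff_of_mem_coheightLevel
      (fun B hB ↦ hF.1 B (filter_subset _ _ hB)) hB)

theorem exists_two_pow_le_card_of_pair (hF : IsSatKSperner X F k) (hk : 1 ≤ k) (ha : a ∈ X)
    (hab : a ≠ b) (hpair : ∀ A ∈ F, a ∈ A ↔ b ∈ A) : ∃ m, k ≤ 2 * m + 1 ∧ 2 ^ m ≤ #F := by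
  have hF₀ := card_smallSets_add_card_largeSets_le F (H := {a, b}) (insert_nonempty _ _)
  have hlevel := two_pow_min_le_card_heightLevel_add_card_coheightLevel hF ha hab hpair
  obtain ⟨m, rfl | rfl⟩ := Nat.even_or_odd' k
  · obtain ⟨m, rfl⟩ : ∃ m', m = m' + 1 := ⟨m - 1, by omega⟩
    have h₁ := hlevel m (m + 1) (by omega)
    have h₂ := hlevel (m + 1) m (by omega)
    rw [min_eq_left m.le_succ] at h₁
    rw [min_eq_right m.le_succ] at h₂
    have hs := card_heightLevel_add_card_heightLevel_le (G := smallSets F {a, b})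
      (by omega : m ≠ m + 1)
    have hl := card_coheightLevel_add_card_coheightLevel_le (G := largeSets F {a, b})
      (by omega : m ≠ m + 1)
    exact ⟨m + 1, by omega, by rw [pow_succ]; omega⟩
  · have h₁ := hlevel m m (by omega)
    rw [min_self] at h₁
    have hs := card_le_card (heightLevel_subset (G := smallSets F {a, b}) (h := m))
    have hl := card_le_card (coheightLevel_subset (G := largeSets F {a, b}) (h := m))
    exact ⟨m, le_rfl, by omega⟩

end Saturated

theorem two_rpow_half_pred_le {k m N : ℕ} (hkm : k ≤ 2 * m + 1) (hN : 2 ^ m ≤ N) :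
    (2 : ℝ) ^ (((k : ℝ) - 1) / 2) ≤ N :=
  calc (2 : ℝ) ^ (((k : ℝ) - 1) / 2) ≤ (2 : ℝ) ^ (m : ℝ) := by
        refine Real.rpow_le_rpow_of_exponent_le one_le_two ?_
        have : (k : ℝ) ≤ 2 * m + 1 := by exact_mod_cast hkm
        linarith
    _ = ((2 ^ m : ℕ) : ℝ) := by rw [Real.rpow_natCast]; push_cast; rfl
    _ ≤ N := by exact_mod_cast hN

theorem gerbner_lower_bound :
    ∀ k : ℕ, 1 ≤ k → ∃ n₀ : ℕ, ∀ n : ℕ, n₀ ≤ n →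
      ∀ F : Finset (Finset ℕ), IsSatKSperner (Finset.Icc 1 n) F k →
        (2 : ℝ) ^ (((k : ℝ) - 1) / 2) ≤ F.card := by
  intro k hk
  refine ⟨2 ^ 2 ^ k, fun n hn F hF ↦ ?_⟩
  by_cases hnF : n ≤ 2 ^ #F
  · have hkF : 2 ^ k ≤ #F := (Nat.pow_le_pow_iff_right one_lt_two).1 (hn.trans hnF)
    exact two_rpow_half_pred_le (by omega) hkF
  · obtain ⟨a, ha, b, -, hab, hpair⟩ :=
      exists_pair_of_two_pow_card_lt (X := Finset.Icc 1 n) (F := F) (by simp; omega)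
    obtain ⟨m, hkm, hmF⟩ := exists_two_pow_le_card_of_pair hF hk ha hab hpair
    exact two_rpow_half_pred_le hkm hmF
end

section
/- For every integer k ≥ 2 and every integer n ≥ 2k − 2, the family F := {A : A ⊆ [k−2]} ∪ {[n] \ A : A ⊆ [k−2]} is a saturated k-Sperner system in P([n]) of cardinality 2^{k−1}. -/
/-!
Write `K = [k-2]` and `X = [n]`. Every member of the family lies in `K` or contains `X \ K`.
Ranking a set `S` by `|S ∩ K|`, plus one when `S ⊄ K`, is strictly monotone along inclusions
inside the family and takes only the `k` values `0, …, k-1`, so there is no chain of `k+1` sets.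
If `S ⊆ X` is not in the family, then `S ∩ K ⊂ S ⊂ X \ (K \ S)`, and filling in a maximal chain
of subsets of `S ∩ K` below and of supersets of `X \ (K \ S)` above gives
`(|S ∩ K| + 1) + 1 + (|K \ S| + 1) = k + 1` sets. The family has `2^(k-2) + 2^(k-2)` members
because `n > k - 2` keeps its two halves disjoint.
-/

open Finset

variable {α : Type*} [DecidableEq α]

theorem not_hasChainOfLen_of_strictMonoOn {F : Finset (Finset α)} {r : Finset α → ℕ} {N : ℕ}
    (hr : StrictMonoOn r (F : Set (Finset α))) (hN : ∀ S ∈ F, r S ≤ N) :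
    ¬ HasChainOfLen F (N + 2) := by
  rintro ⟨C, hC, hCF⟩
  have hrC : StrictMono (r ∘ C) := fun i j hij => hr (hCF i) (hCF j) (hC hij)
  have := card_le_card_of_injOn (r ∘ C) (s := univ) (t := range (N + 1))
    (fun i _ => mem_range.2 (Nat.lt_succ_of_le (hN _ (hCF i)))) hrC.injective.injOn
  simp at this

theorem hasChainOfLen_of_ltSeries {F : Finset (Finset α)} (p : LTSeries (Finset α))
    (hp : ∀ S ∈ p, S ∈ F) : HasChainOfLen F (p.length + 1) :=
  ⟨p, p.strictMono, fun i => hp _ ⟨i, rfl⟩⟩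

theorem exists_ltSeries_between {A B : Finset α} (h : A ⊆ B) :
    ∃ p : LTSeries (Finset α), p.head = A ∧ p.last = B ∧ p.length = #B - #A ∧
      ∀ S ∈ p, A ⊆ S ∧ S ⊆ B := by
  induction hm : #B - #A generalizing B with
  | zero =>
    obtain rfl : A = B := eq_of_subset_of_card_le h (by omega)
    exact ⟨RelSeries.singleton _ A, rfl, rfl, rfl, fun _ ⟨_, hS⟩ => hS ▸ ⟨subset_rfl, subset_rfl⟩⟩
  | succ m ih =>
    obtain ⟨x, hxB, hxA⟩ :=
      exists_of_ssubset (ssubset_of_subset_of_ne h (by rintro rfl; simp at hm))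
    have hAB' : A ⊆ B.erase x := fun y hy => mem_erase.2 ⟨by rintro rfl; exact hxA hy, h hy⟩
    obtain ⟨p, hhead, hlast, hlen, hp⟩ := ih hAB' (by rw [card_erase_of_mem hxB]; omega)
    refine ⟨p.snoc B (hlast ▸ erase_ssubset hxB), by simp [hhead], by simp, by simp [hlen], ?_⟩
    intro S hS
    rcases RelSeries.mem_snoc.1 hS with hS | rfl
    · exact ⟨(hp S hS).1, (hp S hS).2.trans (erase_subset x B)⟩
    · exact ⟨h, subset_rfl⟩

def gerbnerFamily (X K : Finset α) : Finset (Finset α) :=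
  K.powerset ∪ K.powerset.image (X \ ·)

theorem mem_gerbnerFamily {X K S : Finset α} :
    S ∈ gerbnerFamily X K ↔ S ⊆ K ∨ X \ K ⊆ S ∧ S ⊆ X := by
  simp only [gerbnerFamily, mem_union, mem_powerset, mem_image]
  refine or_congr_right ⟨?_, fun ⟨hXS, hSX⟩ => ⟨X \ S, ?_, Finset.sdiff_sdiff_eq_self hSX⟩⟩
  · rintro ⟨B, hBK, rfl⟩
    exact ⟨sdiff_subset_sdiff subset_rfl hBK, sdiff_subset⟩
  · intro x hx
    by_contra hxK
    exact (mem_sdiff.1 hx).2 (hXS (mem_sdiff.2 ⟨(mem_sdiff.1 hx).1, hxK⟩))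

def gerbnerRank (K S : Finset α) : ℕ :=
  #(S ∩ K) + if S ⊆ K then 0 else 1

theorem gerbnerRank_le (K S : Finset α) : gerbnerRank K S ≤ #K + 1 := by
  unfold gerbnerRank
  have := card_le_card (inter_subset_right (s₁ := S) (s₂ := K))
  split_ifs <;> omega

theorem strictMonoOn_gerbnerRank (X K : Finset α) :
    StrictMonoOn (gerbnerRank K) (gerbnerFamily X K : Set (Finset α)) := by
  intro S hS T hT hST
  have hST : S ⊂ T := hST
  rw [mem_coe, mem_gerbnerFamily] at hS hT
  unfold gerbnerRank
  by_cases hTK : T ⊆ K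
  · have hSK := hST.subset.trans hTK
    simpa [hTK, hSK, inter_eq_left.2] using card_lt_card hST
  obtain ⟨hXT, hTX⟩ := hT.resolve_left hTK
  by_cases hSK : S ⊆ K
  · have : S ⊆ T ∩ K := subset_inter hST.subset hSK
    simpa [hTK, hSK, inter_eq_left.2 hSK] using Nat.lt_succ_of_le (card_le_card this)
  obtain ⟨hXS, -⟩ := hS.resolve_left hSK
  suffices S ∩ K ⊂ T ∩ K by simpa [hTK, hSK] using card_lt_card this
  refine (ssubset_iff_of_subset (inter_subset_inter_right hST.subset)).2 ?_
  obtain ⟨x, hxT, hxS⟩ := exists_of_ssubset hST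
  refine ⟨x, mem_inter.2 ⟨hxT, ?_⟩, fun hx => hxS (mem_inter.1 hx).1⟩
  by_contra hxK
  exact hxS (hXS (mem_sdiff.2 ⟨hTX hxT, hxK⟩))

theorem not_hasChainOfLen_gerbnerFamily (X K : Finset α) :
    ¬ HasChainOfLen (gerbnerFamily X K) (#K + 3) :=
  not_hasChainOfLen_of_strictMonoOn (strictMonoOn_gerbnerRank X K)
    fun S _ => gerbnerRank_le K S

theorem hasChainOfLen_insert_gerbnerFamily {X K S : Finset α} (hKX : K ⊆ X) (hSX : S ⊆ X)
    (hS : S ∉ gerbnerFamily X K) : HasChainOfLen (insert S (gerbnerFamily X K)) (#K + 3) := by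
  simp only [mem_gerbnerFamily, not_or, not_and] at hS
  obtain ⟨hSK, hS⟩ := hS
  have hXKS : ¬ X \ K ⊆ S := fun h => hS h hSX
  obtain ⟨p, hp0, hp1, hplen, hp⟩ := exists_ltSeries_between (empty_subset (S ∩ K))
  obtain ⟨q, hq0, hq1, hqlen, hq⟩ := exists_ltSeries_between (sdiff_subset (s := X) (t := K \ S))
  have hlow : p.last < S := hp1 ▸ inf_lt_left.2 hSK
  have hup : S < q.head := by
    rw [hq0]
    refine ssubset_of_subset_of_ne (subset_sdiff.2 ⟨hSX, disjoint_sdiff⟩) fun h => ?_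
    exact hXKS (h ▸ sdiff_subset_sdiff subset_rfl sdiff_subset)
  let c := (p.snoc S hlow).append q (by simpa using hup)
  have hc : c.length + 1 = #K + 3 := by
    have := card_inter_add_card_sdiff K S
    have := card_le_card (sdiff_subset.trans hKX : K \ S ⊆ X)
    simp [c, hplen, hqlen, card_sdiff_of_subset (sdiff_subset.trans hKX), inter_comm S K]
    omega
  rw [← hc]
  refine hasChainOfLen_of_ltSeries c fun T hT => ?_
  rw [← RelSeries.mem_toList, RelSeries.toList_append, List.mem_append, RelSeries.mem_toList,
    RelSeries.mem_toList, RelSeries.mem_snoc] at hT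
  rcases hT with (hT | rfl) | hT
  · exact mem_insert_of_mem (mem_gerbnerFamily.2 (.inl ((hp T hT).2.trans inter_subset_right)))
  · exact mem_insert_self T _
  · refine mem_insert_of_mem (mem_gerbnerFamily.2 (.inr ⟨?_, (hq T hT).2⟩))
    exact (sdiff_subset_sdiff subset_rfl sdiff_subset).trans (hq T hT).1

theorem isSatKSperner_gerbnerFamily {X K : Finset α} (hKX : K ⊆ X) :
    IsSatKSperner X (gerbnerFamily X K) (#K + 2) := by
  refine ⟨fun S hS => ?_, not_hasChainOfLen_gerbnerFamily X K,
    fun S hSX hS => hasChainOfLen_insert_gerbnerFamily hKX hSX hS⟩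
  rcases mem_gerbnerFamily.1 hS with hSK | ⟨-, hSX⟩
  exacts [hSK.trans hKX, hSX]

theorem card_gerbnerFamily {X K : Finset α} (hKX : K ⊂ X) :
    #(gerbnerFamily X K) = 2 ^ (#K + 1) := by
  have hdisj : Disjoint K.powerset (K.powerset.image (X \ ·)) := by
    refine disjoint_left.2 fun S hSK hS => ?_
    obtain ⟨B, hBK, rfl⟩ := mem_image.1 hS
    rw [mem_powerset] at hSK hBK
    refine hKX.not_subset fun x hx => ?_
    by_cases hxB : x ∈ B
    exacts [hBK hxB, hSK (mem_sdiff.2 ⟨hx, hxB⟩)]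
  have hinj : Set.InjOn (X \ ·) (K.powerset : Set (Finset α)) := fun B₁ h₁ B₂ h₂ h => by
    simp only [coe_powerset, Set.mem_preimage, Set.mem_powerset_iff, coe_subset] at h₁ h₂
    rw [← Finset.sdiff_sdiff_eq_self (h₁.trans hKX.subset),
      ← Finset.sdiff_sdiff_eq_self (h₂.trans hKX.subset)]
    exact congrArg (X \ ·) h
  rw [gerbnerFamily, card_union_of_disjoint hdisj, card_image_of_injOn hinj, card_powerset,
    pow_succ, mul_two]

theorem gerbner_construction (k n : ℕ) (hk : 2 ≤ k) (hn : 2 * k - 2 ≤ n) :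
    IsSatKSperner (Finset.Icc 1 n)
      ((Finset.Icc 1 (k - 2)).powerset ∪
        (Finset.Icc 1 (k - 2)).powerset.image (fun A => Finset.Icc 1 n \ A)) k ∧
    ((Finset.Icc 1 (k - 2)).powerset ∪
        (Finset.Icc 1 (k - 2)).powerset.image (fun A => Finset.Icc 1 n \ A)).card =
      2 ^ (k - 1) := by
  have hKX : Icc 1 (k - 2) ⊂ Icc 1 n := Icc_ssubset_Icc_right (by omega) le_rfl (by omega)
  have hK : #(Icc 1 (k - 2)) = k - 2 := by simp
  have hsat := isSatKSperner_gerbnerFamily hKX.subset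
  have hcard := card_gerbnerFamily hKX
  rw [hK, Nat.sub_add_cancel hk] at hsat
  rw [hK, show k - 2 + 1 = k - 1 by omega] at hcard
  exact ⟨hsat, hcard⟩
end
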